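/- arXiv:1606.02634 — 3 statements merged into one kernel-verified Lean document; each statement's English description precedes it below -/
import Mathlib

section
/- Let n ≥ 1, 0 < p < ∞ and j ∈ ℕ. There is a constant C such that for every R ≥ C, every 0 < c < 1/C, every f ∈ L^p_loc(ℝ^{n+1}), and every cube Q_R ⊂ ℝ^{n+1} of side R, there exists a cube Q of side 2R contained in 4Q_R such that ‖f‖_{L^p(Q_R)} ≤ (1 + cC)·‖f‖_{L^p(I^{c,j}(Q))}. -/
open MeasureTheory
open scoped RealInnerProductSpace ENNReal BigOperators Pointwise

noncomputable section

namespace PaperStmt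

/-- `ℝ^n` as a Euclidean space. -/
abbrev Rn (n : ℕ) := EuclideanSpace ℝ (Fin n)

/-- Reinterpret a plain function `Fin n → ℝ` as a point of `ℝ^n`. -/
def toE {n : ℕ} (v : Fin n → ℝ) : Rn n := (EuclideanSpace.equiv (Fin n) ℝ).symm v

/-- The graph parametrization `ξ ↦ (ξ, φ ξ)` of a graph-type hypersurface. -/
def graphMap {n : ℕ} (φ : Rn n → ℝ) (ξ : Rn n) : Rn (n + 1) :=
  toE (Fin.snoc (fun i => ξ i) (φ ξ))

/-- The unit normal `(-∇φ(ξ), 1)/√(1+|∇φ(ξ)|²)` of the graph of `φ`,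
as a function of the parameter `ξ`. -/
def graphNormal {n : ℕ} (φ : Rn n → ℝ) (ξ : Rn n) : Rn (n + 1) :=
  (Real.sqrt (1 + ‖gradient φ ξ‖ ^ 2))⁻¹ •
    toE (Fin.snoc (fun i => -(gradient φ ξ i)) 1)

/-- `m`-dimensional volume of the parallelepiped spanned by `m` vectors in `ℝ^d`
(square root of the Gram determinant). -/
def gramVol {m d : ℕ} (v : Fin m → Rn d) : ℝ :=
  Real.sqrt (Matrix.det (Matrix.of fun i j => (inner ℝ (v i) (v j) : ℝ)))

/-- The extension operator `E f (x) = ∫_U e^{i x · Σ(ξ)} f(ξ) dξ`. -/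
def extOp {n : ℕ} (U : Set (Rn n)) (Sm : Rn n → Rn (n + 1)) (f : Rn n → ℂ)
    (x : Rn (n + 1)) : ℂ :=
  ∫ ξ in U, Complex.exp (Complex.I * ((inner ℝ x (Sm ξ) : ℝ) : ℂ)) * f ξ

/-- Distance between two subsets of a Euclidean space. -/
def setDist {d : ℕ} (A B : Set (Rn d)) : ℝ :=
  sInf {t | ∃ a ∈ A, ∃ b ∈ B, t = dist a b}

/-- The margin of a function `f` relative to a reference set `V`:
the distance from the support of `f` to the complement of `V`. -/
def marginOf {n : ℕ} (f : Rn n → ℂ) (V : Set (Rn n)) : ℝ :=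
  setDist (Function.support f) Vᶜ

/-- The (closed) cube in `ℝ^d` with center `c` and side length `R`. -/
def cube {d : ℕ} (c : Rn d) (R : ℝ) : Set (Rn d) :=
  {x | ∀ i, |x i - c i| ≤ R / 2}

/-- The center of the subcube, indexed by `t : Fin d → Fin (2^j)`, of the partition
of the cube with center `c` and side `R` into `2^(d j)` congruent subcubes. -/
def subCenter {d : ℕ} (c : Rn d) (R : ℝ) (j : ℕ) (t : Fin d → Fin (2 ^ j)) : Rn d :=
  toE (fun i => c i - R / 2 + (R / 2 ^ j) * ((t i : ℝ) + 1 / 2))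

/-- A subcube of the standard partition at depth `j` of the cube of center `c`, side `R`. -/
def subCube {d : ℕ} (c : Rn d) (R : ℝ) (j : ℕ) (t : Fin d → Fin (2 ^ j)) : Set (Rn d) :=
  cube (subCenter c R j t) (R / 2 ^ j)

/-- The `(c₀,j)`-interior `I^{c₀,j}(Q)` of the cube `Q` of center `c`, side `R`:
the union of the `(1-c₀)`-dilates (about their centers) of the subcubes of depth `j`. -/
def interiorCJ {d : ℕ} (c : Rn d) (R : ℝ) (c₀ : ℝ) (j : ℕ) : Set (Rn d) :=
  ⋃ t : Fin d → Fin (2 ^ j), cube (subCenter c R j t) ((1 - c₀) * (R / 2 ^ j))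

/-- A smooth graph-type hypersurface in `ℝ^{n+1}`, foliated into flat
`(k-1)`-dimensional leaves, satisfying the structural hypotheses (i) and (ii) of
Bejenaru's hypotheses: the leaves partition `U`, each leaf is carried by `Σ` into a
`(k-1)`-dimensional affine plane, in suitable local coordinates the leaves are given by
fixing the last `n-k+1` coordinates, and the shape operator annihilates leaf directions
(so the unit normal is constant along each leaf). -/
structure FoliatedSurface (n k : ℕ) where
  U : Set (Rn n)
  φ : Rn n → ℝ
  openU : IsOpen U
  bddU : Bornology.IsBounded U
  connU : IsConnected U
  smooth : ContDiff ℝ (⊤ : ℕ∞) φ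
  ι : Type
  leaf : ι → Set (Rn n)
  leafDir : ι → Submodule ℝ (Rn (n + 1))
  leaf_nonempty : ∀ a, (leaf a).Nonempty
  leaf_connected : ∀ a, IsConnected (leaf a)
  leaf_sub : ∀ a, leaf a ⊆ U
  leaf_disjoint : ∀ a b, a ≠ b → Disjoint (leaf a) (leaf b)
  leaf_cover : U ⊆ ⋃ a, leaf a
  leafDir_dim : ∀ a, Module.finrank ℝ (leafDir a) = k - 1
  leaf_flat : ∀ a, ∀ ξ ∈ leaf a, ∀ ξ' ∈ leaf a, graphMap φ ξ - graphMap φ ξ' ∈ leafDir a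
  chart : ∀ ξ ∈ U, ∃ V : Set (Rn n), ∃ x : Rn n → Rn n,
    IsOpen V ∧ ξ ∈ V ∧ V ⊆ U ∧ ContDiffOn ℝ (⊤ : ℕ∞) x V ∧ Set.InjOn x V ∧
      ∀ a, ∀ η ∈ V ∩ leaf a, ∀ η' ∈ V ∩ leaf a, ∀ i : Fin n, k - 1 ≤ (i : ℕ) →
        x η i = x η' i
  shape_leaf_zero : ∀ a, ∀ ξ ∈ leaf a, ∀ w : Rn n,
    fderiv ℝ (graphMap φ) ξ w ∈ leafDir a → fderiv ℝ (graphNormal φ) ξ w = 0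

/-- Hypothesis (iii) (transversality and curvature) for a family of `k` foliated
hypersurfaces: for all points `ζ i ∈ S_i`, every `l`, and every orthonormal basis
`v_{k+1},…,v_{n+1}` (written as `DΣ(ζ_l) (w j)`) of the orthogonal complement of the
leaf tangent space inside the tangent space of `S_l`, the `(n+1)`-dimensional volume
spanned by `N_1(ζ_1),…,N_k(ζ_k)` and the shape-operator images `S_{N_l} v_j` is `≥ ν`. -/
def CondIII {n k : ℕ} (Ss : Fin k → FoliatedSurface n k) (ν : ℝ) : Prop :=
  ∀ ζ : (i : Fin k) → Rn n, (∀ i, ζ i ∈ (Ss i).U) →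
    ∀ (l : Fin k) (a : (Ss l).ι), ζ l ∈ (Ss l).leaf a →
      ∀ w : Fin (n + 1 - k) → Rn n,
        Orthonormal ℝ (fun j => fderiv ℝ (graphMap (Ss l).φ) (ζ l) (w j)) →
        (∀ j, ∀ u ∈ (Ss l).leafDir a,
          (inner ℝ (fderiv ℝ (graphMap (Ss l).φ) (ζ l) (w j)) u : ℝ) = 0) →
        LinearMap.range ((fderiv ℝ (graphMap (Ss l).φ) (ζ l) : Rn n →ₗ[ℝ] Rn (n + 1))) ≤
          (Ss l).leafDir a ⊔ Submodule.span ℝ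
            (Set.range fun j => fderiv ℝ (graphMap (Ss l).φ) (ζ l) (w j)) →
        ν ≤ gramVol (Fin.append (fun i : Fin k => graphNormal (Ss i).φ (ζ i))
              (fun j : Fin (n + 1 - k) => -(fderiv ℝ (graphNormal (Ss l).φ) (ζ l) (w j))))

end PaperStmt

namespace PaperStmt


/-- Bernoulli-type lower bound: for `0 < p` there is `lam > 0` with
`1 + lam * x ≤ (1+x)^p` for `x ∈ [0,1]`. -/
lemma exists_lam (p : ℝ) (hp : 0 < p) :
    ∃ lam : ℝ, 0 < lam ∧ ∀ x : ℝ, 0 ≤ x → x ≤ 1 → 1 + lam * x ≤ (1 + x) ^ p := by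
  rcases le_or_gt 1 p with hp1 | hp1
  · refine ⟨1, one_pos, fun x hx0 hx1 => ?_⟩
    calc 1 + 1 * x ≤ 1 + p * x := by nlinarith
      _ ≤ (1 + x) ^ p := one_add_mul_self_le_rpow_one_add (by linarith) hp1
  · refine ⟨2 ^ p - 1, ?_, ?_⟩
    · have h2 : (2:ℝ) ^ (0:ℝ) < 2 ^ p := by
        rw [Real.rpow_lt_rpow_left_iff (by norm_num)]; exact hp
      simp only [Real.rpow_zero] at h2; linarith
    · intro x hx0 hx1
      have hc := Real.concaveOn_rpow hp.le hp1.le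
      have h := hc.2 (Set.mem_Ici.mpr (by norm_num : (0:ℝ) ≤ 1))
        (Set.mem_Ici.mpr (by norm_num : (0:ℝ) ≤ 2)) (by linarith : (0:ℝ) ≤ 1 - x) hx0
        (by ring)
      simp only [smul_eq_mul, Real.one_rpow] at h
      have he : (1 - x) * 1 + x * 2 = 1 + x := by ring
      rw [he] at h
      nlinarith [h]

lemma measurableSet_cube {d : ℕ} (c : Rn d) (L : ℝ) : MeasurableSet (cube c L) := by
  have hrw : cube c L = ⋂ i, {x : Rn d | |x i - c i| ≤ L / 2} := by
    ext x
    exact ⟨fun hx => Set.mem_iInter.mpr fun i => hx i, fun hx i => Set.mem_iInter.mp hx i⟩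
  rw [hrw]
  refine MeasurableSet.iInter fun i => ?_
  have hproj : Measurable fun x : Rn d => x i := (EuclideanSpace.proj (𝕜 := ℝ) i).continuous.measurable
  exact measurableSet_le ((hproj.sub measurable_const).abs) measurable_const

lemma measurableSet_interiorCJ {d : ℕ} (c : Rn d) (R c₀ : ℝ) (j : ℕ) :
    MeasurableSet (interiorCJ c R c₀ j) :=
  MeasurableSet.iUnion fun _ => measurableSet_cube _ _

lemma fac_aux (nn lam c C : ℝ) (hc : 0 < c) (hnn : 0 ≤ nn)
    (hc16 : 8 * (nn + 1) * c ≤ 1/2) (hlamC : 16 * (nn + 1) ≤ lam * C) :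
    (1:ℝ) ≤ (1 + lam * (c * C)) * (1 - 8 * (nn + 1) * c) := by
  have hLC : (0:ℝ) ≤ lam * C := by nlinarith
  nlinarith [mul_nonneg hc.le (sub_nonneg.mpr hlamC), mul_nonneg hc.le hc.le,
    mul_le_mul_of_nonneg_left hc16 (mul_nonneg hc.le hLC)]

set_option maxHeartbeats 2000000 in
/-- Lemma 3.3 of the paper: given a cube `Q_R` of side `R`, one can
find a cube `Q` of side `2R` inside `4Q_R` such that the `L^p` norm over `Q_R` is
controlled, up to a factor `1 + cC`, by the `L^p` norm over the `(c,j)`-interior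
`I^{c,j}(Q)` of `Q`. -/
theorem statement_4 (n : ℕ) (hn : 1 ≤ n) (p : ℝ) (hp0 : 0 < p)
    (j : ℕ) :
    ∃ C : ℝ, 0 < C ∧
      ∀ R : ℝ, C ≤ R → ∀ c : ℝ, 0 < c → c < 1 / C →
        ∀ f : Rn (n + 1) → ℂ, AEStronglyMeasurable f volume →
          ∀ x₀ : Rn (n + 1), ∃ y : Rn (n + 1),
            cube y (2 * R) ⊆ cube x₀ (4 * R) ∧
            eLpNorm f (ENNReal.ofReal p) (volume.restrict (cube x₀ R)) ≤
              ENNReal.ofReal (1 + c * C) *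
                eLpNorm f (ENNReal.ofReal p)
                  (volume.restrict (interiorCJ y (2 * R) c j)) := by
  classical
  obtain ⟨lam, hlam0, hlam⟩ := exists_lam p hp0
  refine ⟨16 * ((n:ℝ) + 2) * (1 + 1/lam), by positivity, ?_⟩
  set C : ℝ := 16 * ((n:ℝ) + 2) * (1 + 1/lam) with hC_def
  intro R hR c hc hcC f hf x₀
  have hlaminv : (0:ℝ) < 1/lam := by positivity
  have hC1 : 16 * ((n:ℝ) + 2) ≤ C := by rw [hC_def]; nlinarith
  have hC2 : 16 * ((n:ℝ) + 1) / lam ≤ C := by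
    rw [hC_def, div_le_iff₀ hlam0]
    have : 16 * ((n:ℝ) + 2) * (1 + 1 / lam) * lam = 16*((n:ℝ)+2)*lam + 16*((n:ℝ)+2) := by
      field_simp
    rw [this]; nlinarith
  have hC0 : (0:ℝ) < C := by positivity
  have hR0 : (0:ℝ) < R := lt_of_lt_of_le hC0 hR
  have hcC1 : c * C < 1 := by
    have h := mul_lt_mul_of_pos_right hcC hC0
    rw [div_mul_cancel₀] at h
    · exact h
    · exact ne_of_gt hC0
  have hn1 : (1:ℝ) ≤ n := by exact_mod_cast hn
  have hcsmall : c * (16 * ((n:ℝ)+2)) < 1 :=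
    lt_of_le_of_lt (by nlinarith [hc.le]) hcC1
  have hc8 : c ≤ 1/8 := by nlinarith
  have hc16 : 8 * ((n:ℝ)+1) * c ≤ 1/2 := by nlinarith
  -- grid data
  set h : ℝ := 2 * R / 2 ^ j with hh_def
  have h2j : (0:ℝ) < 2 ^ j := by positivity
  have h1p : (1:ℝ) ≤ 2 ^ j := by exact_mod_cast Nat.one_le_two_pow
  have hh0 : 0 < h := by rw [hh_def]; positivity
  have hhR : h ≤ 2 * R := by
    rw [hh_def]; exact div_le_self (by linarith) h1p
  have h2R : 2 ^ j * h = 2 * R := by rw [hh_def]; field_simp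
  set σ : ℝ := c * h with hσ_def
  have hσ0 : 0 < σ := mul_pos hc hh0
  have hσh : σ ≤ h / 4 := by rw [hσ_def]; nlinarith
  set M : ℕ := ⌊1 / (4 * c)⌋₊ with hM_def
  have hMle : (M : ℝ) ≤ 1 / (4 * c) := Nat.floor_le (by positivity)
  have h8c : (1:ℝ) ≤ 1 / (8 * c) := by rw [le_div_iff₀ (by positivity)]; linarith
  have hMge : 1 / (8 * c) ≤ (M : ℝ) := by
    have hfl := Nat.sub_one_lt_floor (1 / (4 * c))
    rw [← hM_def] at hfl
    have e : 1 / (4*c) = 2 * (1/(8*c)) := by field_simp; ring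
    linarith
  have hM0 : (0:ℝ) < M := lt_of_lt_of_le (by linarith) hMge
  have hMn2 : (n:ℝ) + 2 ≤ M := by
    have : ((n:ℝ)+2) ≤ 1/(8*c) := by
      rw [le_div_iff₀ (by positivity)]; nlinarith
    linarith
  have hMn2' : n + 2 ≤ M := by exact_mod_cast hMn2
  set y : ℕ → Rn (n+1) := fun m => toE (fun i => x₀ i + m * σ) with hy_def
  have hy_apply : ∀ (m : ℕ) (i : Fin (n+1)), y m i = x₀ i + m * σ := fun m i => rfl
  have hMσ : (M:ℝ) * σ ≤ h / 4 := by
    calc (M:ℝ) * σ ≤ (1/(4*c)) * σ := mul_le_mul_of_nonneg_right hMle hσ0.le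
      _ = h/4 := by rw [hσ_def]; field_simp
  have hsubQ : ∀ m : ℕ, m < M → cube (y m) (2*R) ⊆ cube x₀ (4*R) := by
    intro m hm x hx i
    have h1 := hx i
    have h2 : |x i - x₀ i| ≤ |x i - y m i| + |y m i - x₀ i| := abs_sub_le _ _ _
    have h3 : |y m i - x₀ i| = m * σ := by
      rw [hy_apply, show x₀ i + m*σ - x₀ i = (m:ℝ)*σ from by ring]
      exact abs_of_nonneg (by positivity)
    have hm' : (m:ℝ) ≤ M := by exact_mod_cast hm.le
    have h4 : (m:ℝ) * σ ≤ h/4 :=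
      le_trans (mul_le_mul_of_nonneg_right hm' hσ0.le) hMσ
    have h5 : h / 4 ≤ R / 2 := by linarith
    have h6 : |x i - x₀ i| ≤ 2*R/2 + (m:ℝ)*σ := by rw [← h3]; linarith
    show |x i - x₀ i| ≤ 4*R/2
    linarith
  -- Claim A : coordinatewise membership implies membership in the interior
  have claimA : ∀ (m : ℕ) (a : Rn (n+1)),
      (∀ i : Fin (n+1), ∃ t : Fin (2^j),
        |a i - (x₀ i + m * σ - R + h * ((t:ℝ) + 1/2))| ≤ (1-c) * h / 2) →
      a ∈ interiorCJ (y m) (2*R) c j := by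
    intro m a ha
    choose t ht using ha
    refine Set.mem_iUnion.mpr ⟨t, ?_⟩
    intro i
    have hcen : subCenter (y m) (2*R) j t i = x₀ i + m * σ - R + h * ((t i : ℝ) + 1/2) := by
      show y m i - 2*R/2 + (2*R/2^j) * ((t i : ℝ) + 1/2) = _
      rw [hy_apply, ← hh_def]; ring
    show |a i - subCenter (y m) (2*R) j t i| ≤ (1-c) * (2*R/2^j) / 2
    rw [hcen, ← hh_def]
    exact ht i
  -- Step 1 : if all subintervals fail, the point is near the grid
  have step1 : ∀ (m : ℕ), m < M → ∀ v : ℝ, R/2 ≤ v → v ≤ 3*R/2 →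
      (∀ t : Fin (2^j), ¬ (|v - σ * m - h * ((t:ℝ) + 1/2)| ≤ (1-c) * h / 2)) →
      ∃ k : ℤ, |v - σ * m - k * h| < σ / 2 := by
    intro m hm v hv1 hv2 hbad
    by_contra hno
    push_neg at hno
    set w : ℝ := v - σ * m with hw_def
    have hm' : (m:ℝ) ≤ M := by exact_mod_cast hm.le
    have hmσ : σ * (m:ℝ) ≤ h/4 := by
      rw [mul_comm]
      exact le_trans (mul_le_mul_of_nonneg_right hm' hσ0.le) hMσ
    have hw0 : 0 ≤ w := by
      have : h/4 ≤ R/2 := by linarith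
      rw [hw_def]; linarith
    have hw2R : w ≤ 2 * R := by
      rw [hw_def]
      have : (0:ℝ) ≤ σ * m := mul_nonneg hσ0.le (Nat.cast_nonneg m)
      linarith
    set k : ℤ := ⌊w / h⌋ with hk_def
    have hk1 : (k:ℝ) * h ≤ w := by
      have hfl := Int.floor_le (w / h)
      rw [← hk_def] at hfl
      calc (k:ℝ) * h ≤ (w/h) * h := mul_le_mul_of_nonneg_right hfl hh0.le
        _ = w := by field_simp
    have hk2 : w < ((k:ℝ) + 1) * h := by
      have hfl := Int.lt_floor_add_one (w / h)
      rw [← hk_def] at hfl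
      calc w = (w/h) * h := by field_simp
        _ < ((k:ℝ) + 1) * h := by
            apply mul_lt_mul_of_pos_right _ hh0
            exact_mod_cast hfl
    set r : ℝ := w - k * h with hr_def
    have hr0 : 0 ≤ r := by rw [hr_def]; linarith
    have hrh : r < h := by rw [hr_def]; nlinarith
    have hlow : σ/2 ≤ r := by
      have hnk := hno k
      rw [show v - σ * m - (k:ℝ) * h = r from by rw [hr_def, hw_def]] at hnk
      calc σ/2 ≤ |r| := hnk
        _ = r := abs_of_nonneg hr0
    have hhigh : r ≤ h - σ/2 := by
      have hnk := hno (k+1)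
      rw [show v - σ * m - ((k+1 : ℤ):ℝ) * h = r - h from by push_cast; rw [hr_def, hw_def]; ring] at hnk
      rw [abs_of_nonpos (by linarith)] at hnk
      linarith
    have hk0 : 0 ≤ k := by
      rw [hk_def]
      exact Int.floor_nonneg.mpr (div_nonneg hw0 hh0.le)
    have hkj : (k:ℝ) < 2 ^ j := by
      by_contra hge
      push_neg at hge
      have hmul : (2:ℝ)^j * h ≤ (k:ℝ) * h := mul_le_mul_of_nonneg_right hge hh0.le
      rw [h2R] at hmul
      nlinarith
    have hkj' : k.toNat < 2 ^ j := by
      have hkint : k < ((2^j : ℕ) : ℤ) := by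
        have hr2 : (k:ℝ) < (((2^j : ℕ) : ℤ) : ℝ) := by push_cast; exact hkj
        exact_mod_cast hr2
      omega
    apply hbad ⟨k.toNat, hkj'⟩
    have hcast : ((⟨k.toNat, hkj'⟩ : Fin (2^j)) : ℝ) = (k:ℝ) := by
      show ((k.toNat : ℕ) : ℝ) = (k:ℝ)
      rw [show ((k.toNat : ℕ) : ℝ) = ((k.toNat : ℤ) : ℝ) from by push_cast; ring]
      rw [Int.toNat_of_nonneg hk0]
    rw [hcast, show v - σ * m - h * ((k:ℝ) + 1/2) = r - h/2 from by rw [hr_def, hw_def]; ring]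
    rw [abs_le]
    constructor
    · nlinarith
    · nlinarith
  -- Step 2 : near-grid can happen for at most one shift
  have step2' : ∀ (v : ℝ) (m m' : ℕ), m < m' → m' < M →
      (∃ k : ℤ, |v - σ * m - k * h| < σ / 2) →
      (∃ k : ℤ, |v - σ * m' - k * h| < σ / 2) → False := by
    rintro v m m' hmm hm' ⟨k, hk⟩ ⟨k', hk'⟩
    rw [abs_lt] at hk hk'
    have hdiff : (1:ℝ) ≤ (m':ℝ) - m := by
      have : (m:ℝ) + 1 ≤ m' := by exact_mod_cast hmm
      linarith
    have hdiff2 : ((m':ℝ) - m) * σ ≤ h/4 := by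
      have hm'M : (m':ℝ) ≤ M := by exact_mod_cast hm'.le
      have hd : ((m':ℝ) - m) ≤ M := by
        have : (0:ℝ) ≤ m := Nat.cast_nonneg m
        linarith
      calc ((m':ℝ) - m) * σ ≤ (M:ℝ) * σ := mul_le_mul_of_nonneg_right hd hσ0.le
        _ ≤ h/4 := hMσ
    have hE : |σ * ((m':ℝ) - m) + ((k' - k : ℤ):ℝ) * h| < σ := by
      rw [abs_lt]
      constructor
      · push_cast
        nlinarith [hk.1, hk.2, hk'.1, hk'.2]
      · push_cast
        nlinarith [hk.1, hk.2, hk'.1, hk'.2]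
    rw [abs_lt] at hE
    rcases le_or_gt 0 (k' - k : ℤ) with he | he
    · have hp1 : (0:ℝ) ≤ ((k' - k : ℤ):ℝ) * h :=
        mul_nonneg (by exact_mod_cast he) hh0.le
      nlinarith [hE.2]
    · have he1 : ((k' - k : ℤ):ℝ) ≤ -1 := by
        have : (k' - k : ℤ) ≤ -1 := by omega
        exact_mod_cast this
      have hp1 : ((k' - k : ℤ):ℝ) * h ≤ -h := by nlinarith
      nlinarith [hE.1]
  -- bad coordinate witness
  have badW : ∀ m : ℕ, ∀ a : Rn (n+1), a ∉ interiorCJ (y m) (2*R) c j →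
      ∃ i : Fin (n+1), ∀ t : Fin (2^j),
        ¬ (|a i - (x₀ i + m * σ - R + h * ((t:ℝ) + 1/2))| ≤ (1-c) * h / 2) := by
    intro m a haI
    by_contra hcon
    push_neg at hcon
    exact haI (claimA m a hcon)
  -- combination: for a ∈ Q_R, each coordinate is bad for at most one shift
  have key : ∀ a ∈ cube x₀ R, ∀ i : Fin (n+1), ∀ m m' : ℕ, m < M → m' < M →
      (∀ t : Fin (2^j), ¬ (|a i - (x₀ i + m * σ - R + h * ((t:ℝ) + 1/2))| ≤ (1-c) * h / 2)) →
      (∀ t : Fin (2^j), ¬ (|a i - (x₀ i + m' * σ - R + h * ((t:ℝ) + 1/2))| ≤ (1-c) * h / 2)) →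
      m = m' := by
    intro a ha i m m' hm hm' hb hb'
    have hai := ha i
    set v : ℝ := a i - x₀ i + R with hv_def
    have hv1 : R/2 ≤ v := by
      rw [hv_def]; have := abs_le.mp hai; linarith [this.1]
    have hv2 : v ≤ 3*R/2 := by
      rw [hv_def]; have := abs_le.mp hai; linarith [this.2]
    have conv : ∀ (mm : ℕ) (t : Fin (2^j)),
        a i - (x₀ i + mm * σ - R + h * ((t:ℝ) + 1/2)) = v - σ * mm - h * ((t:ℝ) + 1/2) := by
      intro mm t; rw [hv_def]; ring
    have hs1 : ∃ k : ℤ, |v - σ * m - k * h| < σ / 2 := by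
      apply step1 m hm v hv1 hv2
      intro t; have hbt := hb t; rw [conv m t] at hbt; exact hbt
    have hs2 : ∃ k : ℤ, |v - σ * m' - k * h| < σ / 2 := by
      apply step1 m' hm' v hv1 hv2
      intro t; have hbt := hb' t; rw [conv m' t] at hbt; exact hbt
    rcases Nat.lt_trichotomy m m' with hlt | heq | hgt
    · exact absurd (step2' v m m' hlt hm' hs1 hs2) (fun x => x)
    · exact heq
    · exact absurd (step2' v m' m hgt hm hs2 hs1) (fun x => x)
  -- cardinality of the set of bad shifts
  have cardb : ∀ a ∈ cube x₀ R,
      ((Finset.range M).filter (fun m => a ∉ interiorCJ (y m) (2*R) c j)).card ≤ n + 1 := by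
    intro a ha
    have hW : ∀ m ∈ (Finset.range M).filter (fun m => a ∉ interiorCJ (y m) (2*R) c j),
        ∃ i : Fin (n+1), ∀ t : Fin (2^j),
        ¬ (|a i - (x₀ i + m * σ - R + h * ((t:ℝ) + 1/2))| ≤ (1-c) * h / 2) := by
      intro m hm
      rw [Finset.mem_filter] at hm
      exact badW m a hm.2
    choose! F hF using hW
    have hcard : ((Finset.range M).filter
        (fun m => a ∉ interiorCJ (y m) (2*R) c j)).card
        ≤ (Finset.univ : Finset (Fin (n+1))).card := by
      apply Finset.card_le_card_of_injOn F (fun m _ => Finset.mem_univ _)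
      intro m hm m' hm' hFeq
      rw [Finset.mem_coe, Finset.mem_filter, Finset.mem_range] at hm hm'
      have h1 := hF m (Finset.mem_filter.mpr ⟨Finset.mem_range.mpr hm.1, hm.2⟩)
      have h2 := hF m' (Finset.mem_filter.mpr ⟨Finset.mem_range.mpr hm'.1, hm'.2⟩)
      rw [hFeq] at h1
      exact key a ha (F m') m m' hm.1 hm'.1 h1 h2
    simpa using hcard
  -- every point of Q_R belongs to some interior
  have cover : ∀ a ∈ cube x₀ R, ∃ m ∈ Finset.range M, a ∈ interiorCJ (y m) (2*R) c j := by
    intro a ha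
    by_contra hcon
    push_neg at hcon
    have hfull : (Finset.range M).filter (fun m => a ∉ interiorCJ (y m) (2*R) c j)
        = Finset.range M := by
      apply Finset.filter_true_of_mem
      intro m hm
      exact hcon m hm
    have hcb := cardb a ha
    rw [hfull, Finset.card_range] at hcb
    omega
  -- measure-theoretic part
  set q := ENNReal.ofReal p with hq_def
  have hq0 : q ≠ 0 := by
    rw [hq_def, Ne, ENNReal.ofReal_eq_zero]; push_neg; exact hp0
  have hqt : q ≠ ⊤ := by rw [hq_def]; exact ENNReal.ofReal_ne_top
  have hqreal : q.toReal = p := by rw [hq_def]; exact ENNReal.toReal_ofReal hp0.le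
  set f' := hf.mk f with hf'_def
  have hsm : StronglyMeasurable f' := hf.stronglyMeasurable_mk
  have hae : f =ᵐ[volume] f' := hf.ae_eq_mk
  set g : Rn (n+1) → ℝ≥0∞ := fun a => (‖f' a‖₊ : ℝ≥0∞) ^ p with hg_def
  have hgm : Measurable g := hsm.measurable.nnnorm.coe_nnreal_ennreal.pow measurable_const
  set μf := volume.withDensity g with hμf_def
  have hQmeas : MeasurableSet (cube x₀ R) := measurableSet_cube _ _
  have hImeas : ∀ m : ℕ, MeasurableSet (interiorCJ (y m) (2*R) c j) :=
    fun m => measurableSet_interiorCJ _ _ _ _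
  have hBmeas : ∀ m : ℕ, MeasurableSet (cube x₀ R \ interiorCJ (y m) (2*R) c j) :=
    fun m => hQmeas.diff (hImeas m)
  have hnorm : ∀ (A : Set (Rn (n+1))), MeasurableSet A →
      eLpNorm f q (volume.restrict A) = (μf A) ^ (1/p) := by
    intro A hA
    rw [eLpNorm_congr_ae (ae_restrict_of_ae hae)]
    rw [eLpNorm_eq_lintegral_rpow_enorm_toReal hq0 hqt, hqreal, hμf_def, withDensity_apply g hA]
    rfl
  -- sum of bad measures
  have hμB : ∀ m : ℕ, μf (cube x₀ R \ interiorCJ (y m) (2*R) c j)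
      = ∫⁻ a, (cube x₀ R \ interiorCJ (y m) (2*R) c j).indicator g a := by
    intro m
    rw [hμf_def, withDensity_apply g (hBmeas m), lintegral_indicator (hBmeas m) g]
  have hμQ : μf (cube x₀ R) = ∫⁻ a, (cube x₀ R).indicator g a := by
    rw [hμf_def, withDensity_apply g hQmeas, lintegral_indicator hQmeas g]
  have hsum : ∑ m ∈ Finset.range M, μf (cube x₀ R \ interiorCJ (y m) (2*R) c j)
      ≤ (n+1 : ℕ) * μf (cube x₀ R) := by
    calc ∑ m ∈ Finset.range M, μf (cube x₀ R \ interiorCJ (y m) (2*R) c j)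
        = ∑ m ∈ Finset.range M,
            ∫⁻ a, (cube x₀ R \ interiorCJ (y m) (2*R) c j).indicator g a := by
          exact Finset.sum_congr rfl fun m _ => hμB m
      _ = ∫⁻ a, ∑ m ∈ Finset.range M,
            (cube x₀ R \ interiorCJ (y m) (2*R) c j).indicator g a :=
          (lintegral_finset_sum _ (fun m _ => hgm.indicator (hBmeas m))).symm
      _ ≤ ∫⁻ a, (n+1 : ℕ) * (cube x₀ R).indicator g a := by
          apply lintegral_mono
          intro a
          dsimp only
          by_cases haQ : a ∈ cube x₀ R
          · rw [Set.indicator_of_mem haQ]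
            calc ∑ m ∈ Finset.range M,
                  (cube x₀ R \ interiorCJ (y m) (2*R) c j).indicator g a
                = ∑ m ∈ (Finset.range M).filter
                    (fun m => a ∈ cube x₀ R \ interiorCJ (y m) (2*R) c j), g a := by
                  rw [Finset.sum_filter]
                  exact Finset.sum_congr rfl fun m _ => Set.indicator_apply _ _ _
              _ = ((Finset.range M).filter
                    (fun m => a ∈ cube x₀ R \ interiorCJ (y m) (2*R) c j)).card • g a :=
                  Finset.sum_const _
              _ ≤ (n+1 : ℕ) * g a := by
                  rw [nsmul_eq_mul]
                  apply mul_le_mul_left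
                  have hfe : (Finset.range M).filter
                      (fun m => a ∈ cube x₀ R \ interiorCJ (y m) (2*R) c j)
                      = (Finset.range M).filter
                      (fun m => a ∉ interiorCJ (y m) (2*R) c j) := by
                    apply Finset.filter_congr
                    intro m _
                    simp only [Set.mem_diff, eq_iff_iff]
                    exact ⟨fun hx => hx.2, fun hx => ⟨haQ, hx⟩⟩
                  rw [hfe]
                  exact_mod_cast cardb a haQ
          · have hzero : ∀ m ∈ Finset.range M,
                (cube x₀ R \ interiorCJ (y m) (2*R) c j).indicator g a = 0 := by
              intro m _
              apply Set.indicator_of_notMem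
              intro hmem
              exact haQ hmem.1
            rw [Set.indicator_of_notMem haQ, Finset.sum_congr rfl hzero]
            simp
      _ = (n+1 : ℕ) * μf (cube x₀ R) := by
          rw [lintegral_const_mul _ (hgm.indicator hQmeas), lintegral_indicator hQmeas,
            hμf_def, withDensity_apply g hQmeas]
  -- choose minimizing shift
  have hMpos : 0 < M := by omega
  obtain ⟨m₀, hm₀, hmin⟩ := Finset.exists_min_image (Finset.range M)
    (fun m => μf (cube x₀ R \ interiorCJ (y m) (2*R) c j)) ⟨0, Finset.mem_range.mpr hMpos⟩
  have hm₀M : m₀ < M := Finset.mem_range.mp hm₀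
  have hMmin : (M : ℝ≥0∞) * μf (cube x₀ R \ interiorCJ (y m₀) (2*R) c j)
      ≤ (n+1 : ℕ) * μf (cube x₀ R) := by
    calc (M : ℝ≥0∞) * μf (cube x₀ R \ interiorCJ (y m₀) (2*R) c j)
        = (Finset.range M).card • μf (cube x₀ R \ interiorCJ (y m₀) (2*R) c j) := by
          rw [Finset.card_range, nsmul_eq_mul]
      _ ≤ ∑ m ∈ Finset.range M, μf (cube x₀ R \ interiorCJ (y m) (2*R) c j) :=
          Finset.card_nsmul_le_sum _ _ _ (fun m hm => hmin m hm)
      _ ≤ _ := hsum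
  by_cases htop : μf (cube x₀ R) = ⊤
  · -- infinite case
    have hQsub : cube x₀ R ⊆ ⋃ m ∈ Finset.range M, interiorCJ (y m) (2*R) c j := by
      intro a ha
      obtain ⟨m, hm, hmem⟩ := cover a ha
      exact Set.mem_biUnion hm hmem
    have hlarge : (⊤ : ℝ≥0∞) ≤ ∑ m ∈ Finset.range M, μf (interiorCJ (y m) (2*R) c j) := by
      rw [← htop]
      exact (measure_mono hQsub).trans (measure_biUnion_finset_le _ _)
    have hex : ∃ m ∈ Finset.range M, μf (interiorCJ (y m) (2*R) c j) = ⊤ := by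
      by_contra hcon
      push_neg at hcon
      have hlt : ∑ m ∈ Finset.range M, μf (interiorCJ (y m) (2*R) c j) < ⊤ :=
        ENNReal.sum_lt_top.mpr (fun m hm => lt_top_iff_ne_top.mpr (hcon m hm))
      exact absurd (lt_of_le_of_lt hlarge hlt) (lt_irrefl _)
    obtain ⟨m₁, hm₁, hIm₁⟩ := hex
    refine ⟨y m₁, hsubQ m₁ (Finset.mem_range.mp hm₁), ?_⟩
    rw [hnorm _ (hImeas m₁), hIm₁]
    rw [ENNReal.top_rpow_of_pos (by positivity)]
    rw [ENNReal.mul_top (by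
      rw [Ne, ENNReal.ofReal_eq_zero]
      push_neg
      nlinarith [mul_pos hc hC0])]
    exact le_top
  · -- finite case
    refine ⟨y m₀, hsubQ m₀ hm₀M, ?_⟩
    have hQfin : μf (cube x₀ R) < ⊤ := lt_top_iff_ne_top.mpr htop
    have hsplit : μf (cube x₀ R)
        ≤ μf (cube x₀ R ∩ interiorCJ (y m₀) (2*R) c j)
          + μf (cube x₀ R \ interiorCJ (y m₀) (2*R) c j) := by
      refine le_trans (measure_mono ?_) (measure_union_le _ _)
      intro a ha
      by_cases hmem : a ∈ interiorCJ (y m₀) (2*R) c j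
      · exact Or.inl ⟨ha, hmem⟩
      · exact Or.inr ⟨ha, hmem⟩
    have hBfin : μf (cube x₀ R \ interiorCJ (y m₀) (2*R) c j) < ⊤ :=
      lt_of_le_of_lt (measure_mono Set.diff_subset) hQfin
    have hGfin : μf (cube x₀ R ∩ interiorCJ (y m₀) (2*R) c j) < ⊤ :=
      lt_of_le_of_lt (measure_mono Set.inter_subset_left) hQfin
    set ar := (μf (cube x₀ R)).toReal with har_def
    set br := (μf (cube x₀ R \ interiorCJ (y m₀) (2*R) c j)).toReal with hbr_def
    set gr := (μf (cube x₀ R ∩ interiorCJ (y m₀) (2*R) c j)).toReal with hgr_def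
    have har0 : 0 ≤ ar := ENNReal.toReal_nonneg
    have hbr0 : 0 ≤ br := ENNReal.toReal_nonneg
    have hgr0 : 0 ≤ gr := ENNReal.toReal_nonneg
    have ha1 : ar ≤ gr + br := by
      rw [har_def, hbr_def, hgr_def, ← ENNReal.toReal_add hGfin.ne hBfin.ne]
      exact ENNReal.toReal_mono (ENNReal.add_lt_top.mpr ⟨hGfin, hBfin⟩).ne hsplit
    have ha2 : (M:ℝ) * br ≤ ((n:ℝ) + 1) * ar := by
      have hrhs : ((n+1 : ℕ) : ℝ≥0∞) * μf (cube x₀ R) ≠ ⊤ :=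
        ENNReal.mul_ne_top (ENNReal.natCast_ne_top _) htop
      have hmm := ENNReal.toReal_mono hrhs hMmin
      rw [ENNReal.toReal_mul, ENNReal.toReal_mul, ENNReal.toReal_natCast, ENNReal.toReal_natCast] at hmm
      simpa [hbr_def, har_def] using hmm
    have hbr_le : br ≤ 8 * ((n:ℝ)+1) * c * ar := by
      have h1 : (1/(8*c)) * br ≤ (M:ℝ) * br := mul_le_mul_of_nonneg_right hMge hbr0
      have h8c0 : (0:ℝ) < 8 * c := by positivity
      have h2 : (1/(8*c)) * br ≤ ((n:ℝ) + 1) * ar := le_trans h1 ha2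
      rw [div_mul_eq_mul_div, one_mul, div_le_iff₀ h8c0] at h2
      exact h2.trans_eq (by ring)
    have hgr_ge : (1 - 8*((n:ℝ)+1)*c) * ar ≤ gr := by
      have he : (1 - 8*((n:ℝ)+1)*c) * ar = ar - 8*((n:ℝ)+1)*c*ar := by ring
      rw [he]
      linarith [hbr_le, ha1]
    have hkey : ar ≤ (1 + c*C)^p * gr := by
      have hx := hlam (c*C) (by positivity) hcC1.le
      have hlamC : 16*((n:ℝ)+1) ≤ lam * C := by
        rw [div_le_iff₀ hlam0] at hC2
        exact le_of_le_of_eq hC2 (mul_comm C lam)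
      have hfac : (1:ℝ) ≤ (1 + lam * (c*C)) * (1 - 8*((n:ℝ)+1)*c) :=
        fac_aux (n:ℝ) lam c C hc (Nat.cast_nonneg n) hc16 hlamC
      have hpos1 : (0:ℝ) ≤ 1 + lam * (c*C) := by positivity
      have hmono : (1 + lam * (c*C)) * ((1 - 8*((n:ℝ)+1)*c) * ar) ≤ (1 + c*C)^p * gr := by
        calc (1 + lam * (c*C)) * ((1 - 8*((n:ℝ)+1)*c) * ar)
            ≤ (1 + lam * (c*C)) * gr := mul_le_mul_of_nonneg_left hgr_ge hpos1
          _ ≤ (1 + c*C)^p * gr := mul_le_mul_of_nonneg_right hx hgr0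
      have hstep := mul_le_mul_of_nonneg_right hfac har0
      calc ar = 1 * ar := (one_mul ar).symm
        _ ≤ (1 + lam * (c*C)) * (1 - 8*((n:ℝ)+1)*c) * ar := hstep
        _ = (1 + lam * (c*C)) * ((1 - 8*((n:ℝ)+1)*c) * ar) := by ring
        _ ≤ (1 + c*C)^p * gr := hmono
    have hfinal : μf (cube x₀ R)
        ≤ ENNReal.ofReal ((1 + c*C)^p) * μf (interiorCJ (y m₀) (2*R) c j) := by
      have h1 : μf (cube x₀ R) = ENNReal.ofReal ar := by
        rw [har_def, ENNReal.ofReal_toReal htop]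
      have h2 : ENNReal.ofReal gr ≤ μf (interiorCJ (y m₀) (2*R) c j) := by
        rw [hgr_def, ENNReal.ofReal_toReal hGfin.ne]
        exact measure_mono Set.inter_subset_right
      calc μf (cube x₀ R) = ENNReal.ofReal ar := h1
        _ ≤ ENNReal.ofReal ((1 + c*C)^p * gr) := ENNReal.ofReal_le_ofReal hkey
        _ = ENNReal.ofReal ((1 + c*C)^p) * ENNReal.ofReal gr :=
            ENNReal.ofReal_mul (by positivity)
        _ ≤ ENNReal.ofReal ((1 + c*C)^p) * μf (interiorCJ (y m₀) (2*R) c j) :=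
            mul_le_mul_right h2 _
    rw [hnorm _ hQmeas, hnorm _ (hImeas m₀)]
    have h1p' : (0:ℝ) ≤ 1/p := by positivity
    calc (μf (cube x₀ R)) ^ (1/p)
        ≤ (ENNReal.ofReal ((1 + c*C)^p) * μf (interiorCJ (y m₀) (2*R) c j)) ^ (1/p) :=
          ENNReal.rpow_le_rpow hfinal h1p'
      _ = (ENNReal.ofReal ((1 + c*C)^p)) ^ (1/p)
            * (μf (interiorCJ (y m₀) (2*R) c j)) ^ (1/p) :=
          ENNReal.mul_rpow_of_nonneg _ _ h1p'
      _ = ENNReal.ofReal (1 + c*C) * (μf (interiorCJ (y m₀) (2*R) c j)) ^ (1/p) := by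
          rw [ENNReal.ofReal_rpow_of_pos (by positivity), one_div,
            Real.rpow_rpow_inv (by positivity) (ne_of_gt hp0)]

end PaperStmt
end
end

section
/- Let n ≥ 1 and 2 ≤ k ≤ n+1. For i = 2,…,k let π_i : ℤ^{n+1} → ℤ^n be the map deleting the i-th coordinate. Then for all g₁ : ℤ^{n+1} → [0,∞) and g_i : ℤ^n → [0,∞) (i = 2,…,k): ( Σ_{z∈ℤ^{n+1}} ( g₁(z)·∏_{i=2}^{k} g_i(π_i z) )^{2/(k−1)} )^{(k−1)/2} ≲ ‖g₁‖_{ℓ^∞_{z₁,z_{k+1},…,z_{n+1}} ℓ²_{z₂,…,z_k}} · ∏_{i=2}^{k} ‖g_i‖_{ℓ²(ℤⁿ)}, where ‖g₁‖_{ℓ^∞_{z₁,z_{k+1},…,z_{n+1}} ℓ²_{z₂,…,z_k}} := sup over (z₁, z_{k+1},…,z_{n+1}) of ( Σ_{(z₂,…,z_k)∈ℤ^{k−1}} g₁(z)² )^{1/2}. -/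
open scoped ENNReal BigOperators

noncomputable section

namespace PaperStmt

open MeasureTheory

/-- Reassemble a point `z ∈ ℤ^{n+1}` from its first coordinate `a = z₁`, its middle
block `b = (z₂,…,z_k)` and its last block `c = (z_{k+1},…,z_{n+1})` (`1`-based
indexing as in the paper). -/
def assemble {n k : ℕ} (hk : 2 ≤ k) (hkn : k ≤ n + 1) (a : ℤ) (b : Fin (k - 1) → ℤ)
    (c : Fin (n + 1 - k) → ℤ) : Fin (n + 1) → ℤ := fun j =>
  if h0 : (j : ℕ) = 0 then a
  else if h1 : (j : ℕ) < k then b ⟨(j : ℕ) - 1, by omega⟩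
  else c ⟨(j : ℕ) - k, by have := j.isLt; omega⟩

/-- Finitary Hölder for `tsum` in `ℝ≥0∞`. -/
lemma tsum_prod_rpow_le {α ι : Type*} (s : Finset ι) (f : ι → α → ℝ≥0∞)
    {p : ι → ℝ} (hp : ∑ i ∈ s, p i = 1) (h2p : ∀ i ∈ s, 0 ≤ p i) :
    ∑' a, ∏ i ∈ s, f i a ^ p i ≤ ∏ i ∈ s, (∑' a, f i a) ^ p i := by
  letI : MeasurableSpace α := ⊤
  haveI : MeasurableSingletonClass α := ⟨fun _ => trivial⟩
  calc ∑' a, ∏ i ∈ s, f i a ^ p i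
      = ∫⁻ a, ∏ i ∈ s, f i a ^ p i ∂Measure.count := (lintegral_count _).symm
    _ ≤ ∏ i ∈ s, (∫⁻ a, f i a ∂Measure.count) ^ p i :=
        ENNReal.lintegral_prod_norm_pow_le s
          (fun i _ => (Measurable.aemeasurable (fun _ _ => MeasurableSpace.measurableSet_top))) hp h2p
    _ = ∏ i ∈ s, (∑' a, f i a) ^ p i := by simp_rw [lintegral_count]

/-- Two-function Hölder for `tsum` in `ℝ≥0∞`. -/
lemma tsum_mul_rpow_le {α : Type*} (f g : α → ℝ≥0∞) {p q : ℝ}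
    (hp : 0 ≤ p) (hq : 0 ≤ q) (hpq : p + q = 1) :
    ∑' a, f a ^ p * g a ^ q ≤ (∑' a, f a) ^ p * (∑' a, g a) ^ q := by
  have := tsum_prod_rpow_le (α := α) (ι := Bool) Finset.univ
    (fun b a => if b then f a else g a) (p := fun b => if b then p else q)
    (by simpa [add_comm q p] using hpq) (by rintro (_|_) _ <;> simpa)
  simpa [Fintype.prod_bool] using this


lemma tsum_cons (M : ℕ) (f : (Fin (M+1) → ℤ) → ℝ≥0∞) :
    ∑' x : Fin (M+1) → ℤ, f x = ∑' (a : ℤ), ∑' y : Fin M → ℤ, f (Fin.cons a y) := by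
  rw [← (Fin.consEquiv (fun _ : Fin (M+1) => ℤ)).tsum_eq f]
  exact ENNReal.tsum_prod'

lemma cons_comp_succAbove {M : ℕ} (a : ℤ) (y : Fin (M+1) → ℤ) (j : Fin (M+1)) :
    Fin.cons a y ∘ (j.succ).succAbove = Fin.cons a (y ∘ j.succAbove) := by
  funext t
  cases t using Fin.cases with
  | zero => simp [Fin.succ_succAbove_zero]
  | succ t => simp [Fin.succ_succAbove_succ]

/-- Discrete Loomis–Whitney inequality on `ℤ^(M+2)`. -/
lemma LW : ∀ (M : ℕ) (H : Fin (M+2) → (Fin (M+1) → ℤ) → ℝ≥0∞),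
    ∑' x : Fin (M+2) → ℤ, ∏ i, H i (x ∘ i.succAbove) ^ (((M:ℝ)+1)⁻¹)
      ≤ ∏ i, (∑' y, H i y) ^ (((M:ℝ)+1)⁻¹) := by
  intro M
  induction M with
  | zero =>
    intro H
    have hexp : ((((0:ℕ)):ℝ)+1)⁻¹ = 1 := by norm_num
    have e1 : ∀ (a : ℤ) (y : Fin 1 → ℤ), Fin.cons a y ∘ (0 : Fin 2).succAbove = y := by
      intro a y; funext t; simp [Fin.succAbove_zero]
    have e2 : ∀ (a : ℤ) (y : Fin 1 → ℤ),
        Fin.cons a y ∘ (1 : Fin 2).succAbove = fun _ : Fin 1 => a := by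
      intro a y; funext t
      have ht : t = 0 := Subsingleton.elim t 0
      subst ht
      simp only [Function.comp_apply]
      have h1 : (1 : Fin 2).succAbove 0 = (0 : Fin 2) := by decide
      rw [h1, Fin.cons_zero]
    have e3 : ∑' (a : ℤ), H 1 (fun _ : Fin 1 => a) = ∑' y : Fin 1 → ℤ, H 1 y :=
      ((Equiv.funUnique (Fin 1) ℤ).symm.tsum_eq (H 1))
    have goal2 : ∑' x : Fin 2 → ℤ, ∏ i : Fin 2, H i (x ∘ i.succAbove)
        ≤ ∏ i : Fin 2, (∑' y : Fin 1 → ℤ, H i y) := by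
      refine le_of_eq ?_
      rw [tsum_cons 1]
      simp only [Fin.prod_univ_two, e1, e2]
      calc ∑' (a : ℤ), ∑' (y : Fin 1 → ℤ), H 0 y * H 1 (fun _ : Fin 1 => a)
          = ∑' (a : ℤ), (∑' (y : Fin 1 → ℤ), H 0 y) * H 1 (fun _ : Fin 1 => a) := by
            congr 1; funext a; exact ENNReal.tsum_mul_right
        _ = (∑' (y : Fin 1 → ℤ), H 0 y) * ∑' (a : ℤ), H 1 (fun _ : Fin 1 => a) :=
            ENNReal.tsum_mul_left
        _ = (∑' (y : Fin 1 → ℤ), H 0 y) * ∑' (y : Fin 1 → ℤ), H 1 y := by rw [e3]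
    simpa [hexp] using goal2
  | succ M IH =>
    intro H
    set q : ℝ := ((M:ℝ)+2)⁻¹ with hq
    have hqcast : (((M+1:ℕ):ℝ)+1)⁻¹ = q := by rw [hq]; congr 1; push_cast; ring
    have hq0 : (0:ℝ) ≤ q := by positivity
    have hr0 : (0:ℝ) ≤ ((M:ℝ)+1)⁻¹ := by positivity
    have hs0 : (0:ℝ) ≤ ((M:ℝ)+1)/((M:ℝ)+2) := by positivity
    have hrs : ((M:ℝ)+1)⁻¹ * (((M:ℝ)+1)/((M:ℝ)+2)) = q := by
      rw [hq]; field_simp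
    simp only [hqcast]
    rw [tsum_cons (M+2)]
    have key : ∀ a : ℤ,
        (∑' y : Fin (M+2) → ℤ, ∏ i, H i (Fin.cons a y ∘ i.succAbove) ^ q)
          ≤ (∑' y, H 0 y) ^ q *
            ∏ j : Fin (M+2), (∑' w : Fin (M+1) → ℤ, H j.succ (Fin.cons a w)) ^ q := by
      intro a
      have comp0 : ∀ y : Fin (M+2) → ℤ, Fin.cons a y ∘ (0 : Fin (M+3)).succAbove = y := by
        intro y; funext t; simp [Fin.succAbove_zero]
      have expand : ∀ y : Fin (M+2) → ℤ,
          ∏ i, H i (Fin.cons a y ∘ i.succAbove) ^ q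
            = H 0 y ^ q *
              ((∏ j : Fin (M+2), H j.succ (Fin.cons a (y ∘ j.succAbove)) ^ (((M:ℝ)+1)⁻¹))
                ^ (((M:ℝ)+1)/((M:ℝ)+2))) := by
        intro y
        rw [Fin.prod_univ_succ, comp0]
        congr 1
        rw [← ENNReal.prod_rpow_of_nonneg hs0]
        refine Finset.prod_congr rfl fun j _ => ?_
        rw [cons_comp_succAbove, ← ENNReal.rpow_mul, hrs]
      calc ∑' y : Fin (M+2) → ℤ, ∏ i, H i (Fin.cons a y ∘ i.succAbove) ^ q
          = ∑' y : Fin (M+2) → ℤ, H 0 y ^ q *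
              ((∏ j : Fin (M+2), H j.succ (Fin.cons a (y ∘ j.succAbove)) ^ (((M:ℝ)+1)⁻¹))
                ^ (((M:ℝ)+1)/((M:ℝ)+2))) := by
            exact tsum_congr expand
        _ ≤ (∑' y, H 0 y) ^ q *
              (∑' y : Fin (M+2) → ℤ,
                ∏ j : Fin (M+2), H j.succ (Fin.cons a (y ∘ j.succAbove)) ^ (((M:ℝ)+1)⁻¹))
                ^ (((M:ℝ)+1)/((M:ℝ)+2)) := by
            have := tsum_mul_rpow_le (f := H 0)
              (g := fun y : Fin (M+2) → ℤ =>
                ∏ j : Fin (M+2), H j.succ (Fin.cons a (y ∘ j.succAbove)) ^ (((M:ℝ)+1)⁻¹))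
              hq0 hs0 (by rw [hq]; field_simp; ring)
            exact this
        _ ≤ (∑' y, H 0 y) ^ q *
              (∏ j : Fin (M+2), (∑' w : Fin (M+1) → ℤ, H j.succ (Fin.cons a w)) ^ (((M:ℝ)+1)⁻¹))
                ^ (((M:ℝ)+1)/((M:ℝ)+2)) := by
            refine mul_le_mul_right (ENNReal.rpow_le_rpow ?_ hs0) _
            exact IH (fun j w => H j.succ (Fin.cons a w))
        _ = (∑' y, H 0 y) ^ q *
              ∏ j : Fin (M+2), (∑' w : Fin (M+1) → ℤ, H j.succ (Fin.cons a w)) ^ q := by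
            congr 1
            rw [← ENNReal.prod_rpow_of_nonneg hs0]
            refine Finset.prod_congr rfl fun j _ => ?_
            rw [← ENNReal.rpow_mul, hrs]
    calc ∑' (a : ℤ), ∑' y : Fin (M+2) → ℤ, ∏ i, H i (Fin.cons a y ∘ i.succAbove) ^ q
        ≤ ∑' (a : ℤ), (∑' y, H 0 y) ^ q *
            ∏ j : Fin (M+2), (∑' w : Fin (M+1) → ℤ, H j.succ (Fin.cons a w)) ^ q :=
          ENNReal.tsum_le_tsum key
      _ = (∑' y, H 0 y) ^ q * ∑' (a : ℤ),
            ∏ j : Fin (M+2), (∑' w : Fin (M+1) → ℤ, H j.succ (Fin.cons a w)) ^ q :=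
          ENNReal.tsum_mul_left
      _ ≤ (∑' y, H 0 y) ^ q *
            ∏ j : Fin (M+2), (∑' (a : ℤ), ∑' w : Fin (M+1) → ℤ, H j.succ (Fin.cons a w)) ^ q := by
          refine mul_le_mul_right ?_ _
          refine tsum_prod_rpow_le (α := ℤ) Finset.univ
            (fun (j : Fin (M+2)) (a : ℤ) => ∑' w : Fin (M+1) → ℤ, H j.succ (Fin.cons a w))
            (p := fun _ => q) ?_ (fun _ _ => hq0)
          rw [Finset.sum_const, Finset.card_univ, Fintype.card_fin, nsmul_eq_mul, hq]
          push_cast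
          field_simp
      _ = ∏ i : Fin (M+3), (∑' y : Fin (M+2) → ℤ, H i y) ^ q := by
          rw [Fin.prod_univ_succ (f := fun i : Fin (M+3) => (∑' y : Fin (M+2) → ℤ, H i y) ^ q)]
          congr 1
          refine Finset.prod_congr rfl fun j _ => ?_
          rw [← tsum_cons (M+1) (H j.succ)]

/-- Weighted Loomis–Whitney fiber estimate. -/
lemma fiber (M : ℕ) (F : (Fin (M+1) → ℤ) → ℝ≥0∞) (H : Fin (M+1) → (Fin M → ℤ) → ℝ≥0∞) :
    ∑' b : Fin (M+1) → ℤ, (F b * ∏ i, H i (b ∘ i.succAbove)) ^ (2/((M:ℝ)+1))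
      ≤ (∑' b, F b ^ (2:ℝ)) ^ (((M:ℝ)+1)⁻¹) *
        ∏ i, (∑' y, H i y ^ (2:ℝ)) ^ (((M:ℝ)+1)⁻¹) := by
  obtain _ | N := M
  · -- M = 0 : Cauchy–Schwarz is not even needed
    have hp : (2 : ℝ)/(((0:ℕ):ℝ)+1) = 2 := by norm_num
    have he : ((((0:ℕ)):ℝ)+1)⁻¹ = 1 := by norm_num
    rw [hp, he]
    show ∑' b : Fin 1 → ℤ, (F b * ∏ i : Fin 1, H i (b ∘ i.succAbove)) ^ (2:ℝ)
        ≤ (∑' b : Fin 1 → ℤ, F b ^ (2:ℝ)) ^ (1:ℝ) *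
          ∏ i : Fin 1, (∑' y : Fin 0 → ℤ, H i y ^ (2:ℝ)) ^ (1:ℝ)
    simp only [ENNReal.rpow_one, Fin.prod_univ_one]
    calc ∑' b : Fin 1 → ℤ, (F b * H 0 (b ∘ (0 : Fin 1).succAbove)) ^ (2:ℝ)
        = ∑' b : Fin 1 → ℤ, F b ^ (2:ℝ) * H 0 (b ∘ (0 : Fin 1).succAbove) ^ (2:ℝ) := by
          refine tsum_congr fun b => ?_
          rw [ENNReal.mul_rpow_of_nonneg _ _ (by norm_num : (0:ℝ) ≤ 2)]
      _ ≤ ∑' b : Fin 1 → ℤ, F b ^ (2:ℝ) * ∑' y : Fin 0 → ℤ, H 0 y ^ (2:ℝ) := by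
          refine ENNReal.tsum_le_tsum fun b => ?_
          exact mul_le_mul_right (ENNReal.le_tsum _) _
      _ = (∑' b : Fin 1 → ℤ, F b ^ (2:ℝ)) * ∑' y : Fin 0 → ℤ, H 0 y ^ (2:ℝ) :=
          ENNReal.tsum_mul_right
  · -- M = N+1 : Cauchy–Schwarz then Loomis–Whitney
    have hc1 : (((N+1:ℕ)):ℝ) + 1 = (N:ℝ) + 2 := by push_cast; ring
    have hr0 : (0:ℝ) ≤ ((N:ℝ)+1)⁻¹ := by positivity
    have hs0 : (0:ℝ) ≤ ((N:ℝ)+1)/((N:ℝ)+2) := by positivity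
    have hq0 : (0:ℝ) ≤ ((N:ℝ)+2)⁻¹ := by positivity
    have hrs : ((N:ℝ)+1)⁻¹ * (((N:ℝ)+1)/((N:ℝ)+2)) = ((N:ℝ)+2)⁻¹ := by field_simp
    rw [hc1]
    have expand : ∀ b : Fin (N+2) → ℤ,
        (F b * ∏ i, H i (b ∘ i.succAbove)) ^ (2/((N:ℝ)+2))
          = (F b ^ (2:ℝ)) ^ (((N:ℝ)+2)⁻¹) *
            ((∏ i, (H i (b ∘ i.succAbove) ^ (2:ℝ)) ^ (((N:ℝ)+1)⁻¹)) ^ (((N:ℝ)+1)/((N:ℝ)+2))) := by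
      intro b
      have e1 : (2:ℝ)/((N:ℝ)+2) = 2 * (((N:ℝ)+2)⁻¹) := by ring
      have e2 : (2:ℝ)/((N:ℝ)+2) = 2 * (((N:ℝ)+1)⁻¹) * (((N:ℝ)+1)/((N:ℝ)+2)) := by
        field_simp
      rw [ENNReal.mul_rpow_of_nonneg _ _ (by positivity : (0:ℝ) ≤ 2/((N:ℝ)+2))]
      congr 1
      · rw [e1, ENNReal.rpow_mul]
      · rw [← ENNReal.prod_rpow_of_nonneg hs0,
          ← ENNReal.prod_rpow_of_nonneg (show (0:ℝ) ≤ 2/((N:ℝ)+2) by positivity)]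
        apply Finset.prod_congr rfl
        intro i _
        rw [← ENNReal.rpow_mul, ← ENNReal.rpow_mul, ← mul_assoc, ← e2]
    calc ∑' b : Fin (N+2) → ℤ, (F b * ∏ i, H i (b ∘ i.succAbove)) ^ (2/((N:ℝ)+2))
        = ∑' b : Fin (N+2) → ℤ, (F b ^ (2:ℝ)) ^ (((N:ℝ)+2)⁻¹) *
            ((∏ i, (H i (b ∘ i.succAbove) ^ (2:ℝ)) ^ (((N:ℝ)+1)⁻¹)) ^ (((N:ℝ)+1)/((N:ℝ)+2))) :=
          tsum_congr expand
      _ ≤ (∑' b, F b ^ (2:ℝ)) ^ (((N:ℝ)+2)⁻¹) *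
            (∑' b : Fin (N+2) → ℤ,
              ∏ i, (H i (b ∘ i.succAbove) ^ (2:ℝ)) ^ (((N:ℝ)+1)⁻¹)) ^ (((N:ℝ)+1)/((N:ℝ)+2)) :=
          tsum_mul_rpow_le _ _ hq0 hs0 (by field_simp; ring)
      _ ≤ (∑' b, F b ^ (2:ℝ)) ^ (((N:ℝ)+2)⁻¹) *
            (∏ i : Fin (N+2), (∑' y : Fin (N+1) → ℤ, H i y ^ (2:ℝ)) ^ (((N:ℝ)+1)⁻¹))
              ^ (((N:ℝ)+1)/((N:ℝ)+2)) := by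
          refine mul_le_mul_right (ENNReal.rpow_le_rpow ?_ hs0) _
          exact LW N (fun i y => H i y ^ (2:ℝ))
      _ = (∑' b, F b ^ (2:ℝ)) ^ (((N:ℝ)+2)⁻¹) *
            ∏ i : Fin (N+2), (∑' y : Fin (N+1) → ℤ, H i y ^ (2:ℝ)) ^ (((N:ℝ)+2)⁻¹) := by
          congr 1
          rw [← ENNReal.prod_rpow_of_nonneg hs0]
          refine Finset.prod_congr rfl fun i _ => ?_
          rw [← ENNReal.rpow_mul, hrs]

/-- `val` of `succAbove`. -/
lemma succAbove_val {m : ℕ} (p : Fin (m+1)) (j : Fin m) :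
    ((p.succAbove j : Fin (m+1)) : ℕ) = if (j:ℕ) < (p:ℕ) then (j:ℕ) else (j:ℕ)+1 := by
  by_cases h : (j:ℕ) < (p:ℕ)
  · rw [Fin.succAbove_of_castSucc_lt _ _ (by rwa [Fin.lt_def])]
    simp [h]
  · rw [Fin.succAbove_of_le_castSucc _ _ (by rw [Fin.le_def]; simpa using not_lt.1 h)]
    simp [h]

def assemble' {n M : ℕ} (hn : M + 1 ≤ n) (a : ℤ) (y : Fin M → ℤ)
    (c : Fin (n + 1 - (M+2)) → ℤ) : Fin n → ℤ := fun j =>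
  if h0 : (j : ℕ) = 0 then a
  else if h1 : (j : ℕ) < M + 1 then y ⟨(j:ℕ) - 1, by omega⟩
  else c ⟨(j:ℕ) - (M+1), by have := j.isLt; omega⟩

def E1 (n M : ℕ) (hk2 : 2 ≤ M+2) (hkn : M+2 ≤ n+1) :
    (ℤ × (Fin (M+2-1) → ℤ) × (Fin (n+1-(M+2)) → ℤ)) ≃ (Fin (n+1) → ℤ) where
  toFun p := assemble hk2 hkn p.1 p.2.1 p.2.2
  invFun z := (z ⟨0, by omega⟩, fun s => z ⟨(s:ℕ)+1, by have := s.isLt; omega⟩,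
               fun u => z ⟨(u:ℕ)+(M+2), by have := u.isLt; omega⟩)
  left_inv p := by
    obtain ⟨a, y, c⟩ := p
    refine Prod.ext ?_ (Prod.ext ?_ ?_)
    · simp [assemble]
    · funext s
      show assemble hk2 hkn a y c ⟨(s:ℕ)+1, _⟩ = y s
      have hs := s.isLt
      simp only [assemble]
      rw [dif_neg (by omega), dif_pos (by omega)]
      exact congrArg y (Fin.ext (show (s:ℕ)+1-1 = (s:ℕ) by omega))
    · funext u
      show assemble hk2 hkn a y c ⟨(u:ℕ)+(M+2), _⟩ = c u
      have hu := u.isLt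
      simp only [assemble]
      rw [dif_neg (by omega), dif_neg (by omega)]
      exact congrArg c (Fin.ext (show (u:ℕ)+(M+2)-(M+2) = (u:ℕ) by omega))
  right_inv z := by
    funext j
    show assemble hk2 hkn _ _ _ j = z j
    simp only [assemble]
    have hj := j.isLt
    split_ifs with h0 h1
    · exact congrArg z (Fin.ext (show 0 = (j:ℕ) by omega))
    · exact congrArg z (Fin.ext (show ((j:ℕ)-1)+1 = (j:ℕ) by omega))
    · exact congrArg z (Fin.ext (show ((j:ℕ)-(M+2))+(M+2) = (j:ℕ) by omega))

def E2 (n M : ℕ) (hn : M + 1 ≤ n) :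
    (ℤ × (Fin M → ℤ) × (Fin (n+1-(M+2)) → ℤ)) ≃ (Fin n → ℤ) where
  toFun p := assemble' hn p.1 p.2.1 p.2.2
  invFun w := (w ⟨0, by omega⟩, fun s => w ⟨(s:ℕ)+1, by have := s.isLt; omega⟩,
               fun u => w ⟨(u:ℕ)+(M+1), by have := u.isLt; omega⟩)
  left_inv p := by
    obtain ⟨a, y, c⟩ := p
    refine Prod.ext ?_ (Prod.ext ?_ ?_)
    · simp [assemble']
    · funext s
      show assemble' hn a y c ⟨(s:ℕ)+1, _⟩ = y s
      have hs := s.isLt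
      simp only [assemble']
      rw [dif_neg (by omega), dif_pos (by omega)]
      exact congrArg y (Fin.ext (show (s:ℕ)+1-1 = (s:ℕ) by omega))
    · funext u
      show assemble' hn a y c ⟨(u:ℕ)+(M+1), _⟩ = c u
      have hu := u.isLt
      simp only [assemble']
      rw [dif_neg (by omega), dif_neg (by omega)]
      exact congrArg c (Fin.ext (show (u:ℕ)+(M+1)-(M+1) = (u:ℕ) by omega))
  right_inv w := by
    funext j
    show assemble' hn _ _ _ j = w j
    simp only [assemble']
    have hj := j.isLt
    split_ifs with h0 h1
    · exact congrArg w (Fin.ext (show 0 = (j:ℕ) by omega))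
    · exact congrArg w (Fin.ext (show ((j:ℕ)-1)+1 = (j:ℕ) by omega))
    · exact congrArg w (Fin.ext (show ((j:ℕ)-(M+1))+(M+1) = (j:ℕ) by omega))

/-- The key projection identity: deleting the `(i+2)`-nd coordinate (`0`-based `i+1`)
of an assembled point is an assembled point over `ℤ^n` whose middle block is
`b ∘ i.succAbove`. -/
lemma proj_eq (n M : ℕ) (hn : M + 1 ≤ n) (hk2 : 2 ≤ M+2) (hkn : M+2 ≤ n+1)
    (a : ℤ) (b : Fin (M+1) → ℤ) (c : Fin (n+1-(M+2)) → ℤ) (i : Fin (M+1)) :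
    (fun j : Fin n => assemble hk2 hkn a b c
        ((⟨(i:ℕ)+1, by have := i.isLt; omega⟩ : Fin (n+1)).succAbove j))
      = assemble' hn a (b ∘ i.succAbove) c := by
  funext j
  have hj := j.isLt
  have hi := i.isLt
  by_cases h0 : (j:ℕ) = 0
  · have heq : (⟨(i:ℕ)+1, by have := i.isLt; omega⟩ : Fin (n+1)).succAbove j
        = ⟨0, by omega⟩ :=
      Fin.ext (by rw [succAbove_val, if_pos (by omega : (j:ℕ) < (i:ℕ)+1)]; exact h0)
    rw [heq]
    simp only [assemble, assemble']
    rw [dif_pos trivial, dif_pos h0]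
  · by_cases h1 : (j:ℕ) < (i:ℕ)+1
    · have heq : (⟨(i:ℕ)+1, by have := i.isLt; omega⟩ : Fin (n+1)).succAbove j
          = ⟨(j:ℕ), by omega⟩ := Fin.ext (by rw [succAbove_val, if_pos h1])
      rw [heq]
      simp only [assemble, assemble']
      rw [dif_neg h0, dif_pos (by omega : (j:ℕ) < M+2), dif_neg h0,
        dif_pos (by omega : (j:ℕ) < M+1)]
      show b _ = b (i.succAbove ⟨(j:ℕ)-1, by omega⟩)
      refine congrArg b (Fin.ext ?_)
      rw [succAbove_val i ⟨(j:ℕ)-1, by omega⟩]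
      try simp only [Fin.val_mk]
      split_ifs <;> omega
    · by_cases h2 : (j:ℕ) < M+1
      · have heq : (⟨(i:ℕ)+1, by have := i.isLt; omega⟩ : Fin (n+1)).succAbove j
            = ⟨(j:ℕ)+1, by omega⟩ := Fin.ext (by rw [succAbove_val, if_neg h1])
        rw [heq]
        simp only [assemble, assemble']
        rw [dif_neg (by omega : ¬((j:ℕ)+1 = 0)), dif_pos (by omega : (j:ℕ)+1 < M+2),
          dif_neg h0, dif_pos h2]
        show b _ = b (i.succAbove ⟨(j:ℕ)-1, by omega⟩)
        refine congrArg b (Fin.ext ?_)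
        rw [succAbove_val i ⟨(j:ℕ)-1, by omega⟩]
        try simp only [Fin.val_mk]
        split_ifs <;> omega
      · have heq : (⟨(i:ℕ)+1, by have := i.isLt; omega⟩ : Fin (n+1)).succAbove j
            = ⟨(j:ℕ)+1, by omega⟩ := Fin.ext (by rw [succAbove_val, if_neg h1])
        rw [heq]
        simp only [assemble, assemble']
        rw [dif_neg (by omega : ¬((j:ℕ)+1 = 0)), dif_neg (by omega : ¬((j:ℕ)+1 < M+2)),
          dif_neg h0, dif_neg h2]
        refine congrArg c (Fin.ext ?_)
        try simp only [Fin.val_mk]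
        omega

/-- Lemma 6.4 of the paper: the discrete weighted
Loomis–Whitney-type inequality. For `2 ≤ k ≤ n+1` and `π_i : ℤ^{n+1} → ℤ^n` the
deletion of the `i`-th coordinate (`i = 2,…,k`, `1`-based),
`‖g₁(z) ∏_{i=2}^k g_i(π_i z)‖_{ℓ^{2/(k-1)}(ℤ^{n+1})} ≲
  ‖g₁‖_{ℓ^∞_{z₁,z_{k+1},…,z_{n+1}} ℓ²_{z₂,…,z_k}} ∏_{i=2}^k ‖g_i‖_{ℓ²(ℤ^n)}`. -/
theorem statement_9 (n k : ℕ) (hn : 1 ≤ n) (hk2 : 2 ≤ k) (hkn : k ≤ n + 1) :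
    ∃ C : ℝ, 0 < C ∧
      ∀ (g₁ : (Fin (n + 1) → ℤ) → ℝ) (g : Fin (k - 1) → (Fin n → ℤ) → ℝ),
        (∀ z, 0 ≤ g₁ z) → (∀ i w, 0 ≤ g i w) →
        (∑' z : Fin (n + 1) → ℤ,
            ENNReal.ofReal
                (g₁ z * ∏ i : Fin (k - 1),
                  g i (fun j => z ((⟨(i : ℕ) + 1, by have := i.isLt; omega⟩ :
                    Fin (n + 1)).succAbove j))) ^ ((2 : ℝ) / ((k : ℝ) - 1))) ^
            (((k : ℝ) - 1) / 2) ≤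
          ENNReal.ofReal C *
            (⨆ (a : ℤ) (c : Fin (n + 1 - k) → ℤ),
              (∑' b : Fin (k - 1) → ℤ,
                  ENNReal.ofReal (g₁ (assemble hk2 hkn a b c)) ^ (2 : ℝ)) ^
                ((1 : ℝ) / 2)) *
            ∏ i : Fin (k - 1),
              (∑' w : Fin n → ℤ, ENNReal.ofReal (g i w) ^ (2 : ℝ)) ^ ((1 : ℝ) / 2) := by
  refine ⟨1, one_pos, ?_⟩
  intro g₁ g hg₁ hg
  obtain ⟨M, rfl⟩ : ∃ M, k = M + 2 := ⟨k - 2, by omega⟩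
  have hn' : M + 1 ≤ n := by omega
  have hp : (2 : ℝ) / ((↑(M+2) : ℝ) - 1) = 2/((M:ℝ)+1) := by push_cast; ring_nf
  have hq : ((↑(M+2) : ℝ) - 1) / 2 = ((M:ℝ)+1)/2 := by push_cast; ring_nf
  rw [hp, hq, ENNReal.ofReal_one, one_mul]
  set A : ℝ≥0∞ := ⨆ (a : ℤ) (c : Fin (n + 1 - (M+2)) → ℤ),
      (∑' b : Fin (M+2-1) → ℤ,
        ENNReal.ofReal (g₁ (assemble hk2 hkn a b c)) ^ (2 : ℝ)) ^ ((1 : ℝ) / 2) with hA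
  -- fiberwise estimate
  have fib : ∀ (a : ℤ) (c : Fin (n+1-(M+2)) → ℤ),
      ∑' b : Fin (M+1) → ℤ,
          (ENNReal.ofReal (g₁ (assemble hk2 hkn a b c)) *
            ∏ i : Fin (M+1),
              ENNReal.ofReal (g i (assemble' hn' a (b ∘ i.succAbove) c)))
            ^ (2/((M:ℝ)+1))
        ≤ A ^ (2/((M:ℝ)+1)) *
          ∏ i : Fin (M+1),
            (∑' y : Fin M → ℤ,
              ENNReal.ofReal (g i (assemble' hn' a y c)) ^ (2:ℝ)) ^ (((M:ℝ)+1)⁻¹) := by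
    intro a c
    refine (fiber M (fun b => ENNReal.ofReal (g₁ (assemble hk2 hkn a b c)))
      (fun i y => ENNReal.ofReal (g i (assemble' hn' a y c)))).trans ?_
    refine mul_le_mul' ?_ le_rfl
    have h2 : (∑' b : Fin (M+1) → ℤ,
        ENNReal.ofReal (g₁ (assemble hk2 hkn a b c)) ^ (2:ℝ)) ^ ((1:ℝ)/2) ≤ A := by
      rw [hA]
      exact le_iSup₂ (f := fun (a : ℤ) (c : Fin (n + 1 - (M+2)) → ℤ) =>
        (∑' b : Fin (M+2-1) → ℤ,
          ENNReal.ofReal (g₁ (assemble hk2 hkn a b c)) ^ (2 : ℝ)) ^ ((1 : ℝ) / 2)) a c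
    calc (∑' b : Fin (M+1) → ℤ,
            ENNReal.ofReal (g₁ (assemble hk2 hkn a b c)) ^ (2:ℝ)) ^ (((M:ℝ)+1)⁻¹)
        = ((∑' b : Fin (M+1) → ℤ,
            ENNReal.ofReal (g₁ (assemble hk2 hkn a b c)) ^ (2:ℝ)) ^ ((1:ℝ)/2))
              ^ (2/((M:ℝ)+1)) := by
          rw [← ENNReal.rpow_mul]
          congr 1
          field_simp
      _ ≤ A ^ (2/((M:ℝ)+1)) := ENNReal.rpow_le_rpow h2 (by positivity)
  -- Hölder over the outer variables
  have main2 : ∑' (ac : ℤ × (Fin (n+1-(M+2)) → ℤ)),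
      ∏ i : Fin (M+1),
        (∑' y : Fin M → ℤ,
          ENNReal.ofReal (g i (assemble' hn' ac.1 y ac.2)) ^ (2:ℝ)) ^ (((M:ℝ)+1)⁻¹)
      ≤ ∏ i : Fin (M+1),
          (∑' w : Fin n → ℤ, ENNReal.ofReal (g i w) ^ (2:ℝ)) ^ (((M:ℝ)+1)⁻¹) := by
    have hW : ∀ i : Fin (M+1),
        (∑' (ac : ℤ × (Fin (n+1-(M+2)) → ℤ)), ∑' y : Fin M → ℤ,
          ENNReal.ofReal (g i (assemble' hn' ac.1 y ac.2)) ^ (2:ℝ))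
        = ∑' w : Fin n → ℤ, ENNReal.ofReal (g i w) ^ (2:ℝ) := by
      intro i
      calc ∑' (ac : ℤ × (Fin (n+1-(M+2)) → ℤ)), ∑' y : Fin M → ℤ,
              ENNReal.ofReal (g i (assemble' hn' ac.1 y ac.2)) ^ (2:ℝ)
          = ∑' (a : ℤ), ∑' (c : Fin (n+1-(M+2)) → ℤ), ∑' y : Fin M → ℤ,
              ENNReal.ofReal (g i (assemble' hn' a y c)) ^ (2:ℝ) := ENNReal.tsum_prod'
        _ = ∑' (a : ℤ), ∑' y : Fin M → ℤ, ∑' (c : Fin (n+1-(M+2)) → ℤ),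
              ENNReal.ofReal (g i (assemble' hn' a y c)) ^ (2:ℝ) := by
            exact tsum_congr fun a => ENNReal.tsum_comm
        _ = ∑' (p : ℤ × (Fin M → ℤ) × (Fin (n+1-(M+2)) → ℤ)),
              ENNReal.ofReal (g i (assemble' hn' p.1 p.2.1 p.2.2)) ^ (2:ℝ) := by
            rw [ENNReal.tsum_prod']
            exact tsum_congr fun a =>
              (ENNReal.tsum_prod' (f := fun bc : (Fin M → ℤ) × (Fin (n+1-(M+2)) → ℤ) =>
                ENNReal.ofReal (g i (assemble' hn' a bc.1 bc.2)) ^ (2:ℝ))).symm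
        _ = ∑' w : Fin n → ℤ, ENNReal.ofReal (g i w) ^ (2:ℝ) :=
            (E2 n M hn').tsum_eq fun w => ENNReal.ofReal (g i w) ^ (2:ℝ)
    calc ∑' (ac : ℤ × (Fin (n+1-(M+2)) → ℤ)),
            ∏ i : Fin (M+1),
              (∑' y : Fin M → ℤ,
                ENNReal.ofReal (g i (assemble' hn' ac.1 y ac.2)) ^ (2:ℝ)) ^ (((M:ℝ)+1)⁻¹)
        ≤ ∏ i : Fin (M+1),
            (∑' (ac : ℤ × (Fin (n+1-(M+2)) → ℤ)), ∑' y : Fin M → ℤ,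
              ENNReal.ofReal (g i (assemble' hn' ac.1 y ac.2)) ^ (2:ℝ)) ^ (((M:ℝ)+1)⁻¹) := by
          refine tsum_prod_rpow_le Finset.univ
            (fun (i : Fin (M+1)) (ac : ℤ × (Fin (n+1-(M+2)) → ℤ)) =>
              ∑' y : Fin M → ℤ,
                ENNReal.ofReal (g i (assemble' hn' ac.1 y ac.2)) ^ (2:ℝ))
            (p := fun _ => (((M:ℝ)+1)⁻¹)) ?_ (fun _ _ => by positivity)
          rw [Finset.sum_const, Finset.card_univ, Fintype.card_fin, nsmul_eq_mul]
          push_cast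
          field_simp
      _ = ∏ i : Fin (M+1),
            (∑' w : Fin n → ℤ, ENNReal.ofReal (g i w) ^ (2:ℝ)) ^ (((M:ℝ)+1)⁻¹) := by
          exact Finset.prod_congr rfl fun i _ => by rw [hW i]
  -- the middle bound
  have hT : (∑' (a : ℤ), ∑' (c : Fin (n+1-(M+2)) → ℤ), ∑' b : Fin (M+1) → ℤ,
        (ENNReal.ofReal (g₁ (assemble hk2 hkn a b c)) *
          ∏ i : Fin (M+1),
            ENNReal.ofReal (g i (assemble' hn' a (b ∘ i.succAbove) c)))
          ^ (2/((M:ℝ)+1)))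
      ≤ A ^ (2/((M:ℝ)+1)) *
        ∏ i : Fin (M+1),
          (∑' w : Fin n → ℤ, ENNReal.ofReal (g i w) ^ (2:ℝ)) ^ (((M:ℝ)+1)⁻¹) := by
    calc ∑' (a : ℤ), ∑' (c : Fin (n+1-(M+2)) → ℤ), ∑' b : Fin (M+1) → ℤ,
            (ENNReal.ofReal (g₁ (assemble hk2 hkn a b c)) *
              ∏ i : Fin (M+1),
                ENNReal.ofReal (g i (assemble' hn' a (b ∘ i.succAbove) c)))
              ^ (2/((M:ℝ)+1))
        ≤ ∑' (a : ℤ), ∑' (c : Fin (n+1-(M+2)) → ℤ),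
            (A ^ (2/((M:ℝ)+1)) *
              ∏ i : Fin (M+1),
                (∑' y : Fin M → ℤ,
                  ENNReal.ofReal (g i (assemble' hn' a y c)) ^ (2:ℝ)) ^ (((M:ℝ)+1)⁻¹)) :=
          ENNReal.tsum_le_tsum fun a => ENNReal.tsum_le_tsum fun c => fib a c
      _ = A ^ (2/((M:ℝ)+1)) * ∑' (a : ℤ), ∑' (c : Fin (n+1-(M+2)) → ℤ),
            ∏ i : Fin (M+1),
              (∑' y : Fin M → ℤ,
                ENNReal.ofReal (g i (assemble' hn' a y c)) ^ (2:ℝ)) ^ (((M:ℝ)+1)⁻¹) := by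
          rw [← ENNReal.tsum_mul_left]
          exact tsum_congr fun a => ENNReal.tsum_mul_left.symm ▸ ENNReal.tsum_mul_left
      _ = A ^ (2/((M:ℝ)+1)) * ∑' (ac : ℤ × (Fin (n+1-(M+2)) → ℤ)),
            ∏ i : Fin (M+1),
              (∑' y : Fin M → ℤ,
                ENNReal.ofReal (g i (assemble' hn' ac.1 y ac.2)) ^ (2:ℝ)) ^ (((M:ℝ)+1)⁻¹) := by
          rw [ENNReal.tsum_prod']
      _ ≤ A ^ (2/((M:ℝ)+1)) *
            ∏ i : Fin (M+1),
              (∑' w : Fin n → ℤ, ENNReal.ofReal (g i w) ^ (2:ℝ)) ^ (((M:ℝ)+1)⁻¹) :=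
          mul_le_mul_right main2 _
  -- put everything together
  calc (∑' z : Fin (n + 1) → ℤ,
          ENNReal.ofReal
              (g₁ z * ∏ i : Fin (M+2-1),
                g i (fun j => z ((⟨(i : ℕ) + 1, by have := i.isLt; omega⟩ :
                  Fin (n + 1)).succAbove j))) ^ ((2:ℝ)/((M:ℝ)+1))) ^ (((M:ℝ)+1)/2)
      = (∑' z : Fin (n + 1) → ℤ,
          (ENNReal.ofReal (g₁ z) * ∏ i : Fin (M+2-1),
              ENNReal.ofReal (g i (fun j => z ((⟨(i : ℕ) + 1, by have := i.isLt; omega⟩ :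
                Fin (n + 1)).succAbove j)))) ^ ((2:ℝ)/((M:ℝ)+1))) ^ (((M:ℝ)+1)/2) := by
        congr 1
        refine tsum_congr fun z => ?_
        rw [ENNReal.ofReal_mul (hg₁ z), ENNReal.ofReal_prod_of_nonneg (fun i _ => hg i _)]
    _ = (∑' (a : ℤ), ∑' (c : Fin (n+1-(M+2)) → ℤ), ∑' b : Fin (M+1) → ℤ,
          (ENNReal.ofReal (g₁ (assemble hk2 hkn a b c)) *
            ∏ i : Fin (M+1),
              ENNReal.ofReal (g i (assemble' hn' a (b ∘ i.succAbove) c)))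
            ^ (2/((M:ℝ)+1))) ^ (((M:ℝ)+1)/2) := by
        congr 1
        rw [← (E1 n M hk2 hkn).tsum_eq, ENNReal.tsum_prod']
        refine tsum_congr fun a => ?_
        rw [ENNReal.tsum_prod', ENNReal.tsum_comm]
        refine tsum_congr fun c => tsum_congr fun b => ?_
        show (ENNReal.ofReal (g₁ (assemble hk2 hkn a b c)) * ∏ i : Fin (M+1),
            ENNReal.ofReal (g i (fun j => assemble hk2 hkn a b c
              ((⟨(i : ℕ) + 1, by have := i.isLt; omega⟩ :
                Fin (n + 1)).succAbove j)))) ^ ((2:ℝ)/((M:ℝ)+1)) = _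
        refine congrArg (· ^ ((2:ℝ)/((M:ℝ)+1)))
          (congrArg _ (Finset.prod_congr rfl fun i _ => ?_))
        rw [proj_eq n M hn' hk2 hkn a b c i]
    _ ≤ (A ^ (2/((M:ℝ)+1)) *
          ∏ i : Fin (M+1),
            (∑' w : Fin n → ℤ, ENNReal.ofReal (g i w) ^ (2:ℝ)) ^ (((M:ℝ)+1)⁻¹))
            ^ (((M:ℝ)+1)/2) := ENNReal.rpow_le_rpow hT (by positivity)
    _ = A * ∏ i : Fin (M+1),
          (∑' w : Fin n → ℤ, ENNReal.ofReal (g i w) ^ (2:ℝ)) ^ ((1:ℝ)/2) := by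
        rw [ENNReal.mul_rpow_of_nonneg _ _ (by positivity : (0:ℝ) ≤ ((M:ℝ)+1)/2)]
        congr 1
        · rw [← ENNReal.rpow_mul,
            show (2/((M:ℝ)+1)) * (((M:ℝ)+1)/2) = 1 by field_simp, ENNReal.rpow_one]
        · rw [← ENNReal.prod_rpow_of_nonneg (by positivity : (0:ℝ) ≤ ((M:ℝ)+1)/2)]
          refine Finset.prod_congr rfl fun i _ => ?_
          rw [← ENNReal.rpow_mul]
          congr 1
          field_simp

end PaperStmt
end
end

section
/- Let η₀ : ℝⁿ → [0,∞) be a Schwartz function with ‖η₀‖_{L¹} = 1 and Fourier transform supported in the unit ball, and let 𝒯 : ℝⁿ → ℝⁿ be an invertible linear map. For r > 0 and j ∈ ℤⁿ set c_j := r𝒯^{−1}(j) and χ_j(x) := η₀(𝒯(x − c_j)/r). Then for every N ∈ ℕ there is a constant C_N (depending on N, n, η₀ and 𝒯 but not on r) such that for every g ∈ L²(ℝⁿ): Σ_{j∈ℤⁿ} ‖⟨(x − c_j)/r⟩^{N}·χ_j·g‖²_{L²(ℝⁿ)} ≤ C_N·‖g‖²_{L²(ℝⁿ)}. -/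
/-!
After the change of variables `y = r⁻¹ 𝒯 x`, the `j`-th weight at `x` is `ψ(y - j)` with
`ψ(u) = ⟨𝒯⁻¹ u⟩^N η₀(u)`, which decays like `(1 + ‖u‖)^{-n}` because `η₀` is Schwartz. Bounding
`(1 + ‖u‖)^{2n}` from below by `∏ᵢ (1 + uᵢ²)` splits `∑_j ψ(y - j)²` into a product of
one-dimensional sums `∑_m (1 + (yᵢ - m)²)⁻¹`, each at most twice `∑_k (1 + k²)⁻¹` uniformly
in `yᵢ`. So `∑_j |χ_j|² ⟨(x - c_j)/r⟩^{2N}` is bounded pointwise, uniformly in `r`, and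
integrating against `|g|²` gives the estimate.
-/

open MeasureTheory
open scoped ENNReal BigOperators

noncomputable section

namespace PaperStmt

/-- The point of `ℝ^n` with integer coordinates `z`. -/
def intVec {n : ℕ} (z : Fin n → ℤ) : Rn n := toE fun i => (z i : ℝ)

/-- The Japanese bracket `⟨s⟩ = (1 + s²)^{1/2}`. -/
def jap (s : ℝ) : ℝ := Real.sqrt (1 + s ^ 2)

end PaperStmt

theorem ENNReal.tsum_pi_prod_le {ι κ : Type*} [Fintype ι] (f : ι → κ → ℝ≥0∞) :
    ∑' j : ι → κ, ∏ i, f i (j i) ≤ ∏ i, ∑' m, f i m := by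
  classical
  rw [ENNReal.tsum_eq_iSup_sum]
  refine iSup_le fun s => ?_
  calc ∑ j ∈ s, ∏ i, f i (j i)
      ≤ ∑ j ∈ Fintype.piFinset fun i => s.image (· i), ∏ i, f i (j i) :=
        Finset.sum_le_sum_of_subset fun j hj =>
          Fintype.mem_piFinset.2 fun i => Finset.mem_image_of_mem _ hj
    _ = ∏ i, ∑ m ∈ s.image (· i), f i m := (Finset.prod_univ_sum _ _).symm
    _ ≤ ∏ i, ∑' m, f i m := Finset.prod_le_prod' fun i _ => ENNReal.sum_le_tsum _

theorem summable_inv_one_add_sq_int : Summable fun k : ℤ => (1 + (k : ℝ) ^ 2)⁻¹ := by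
  refine Summable.of_norm_bounded_eventually (Real.summable_one_div_int_pow.2 one_lt_two) ?_
  filter_upwards [Filter.eventually_cofinite_ne 0] with k hk
  rw [Real.norm_of_nonneg (by positivity), one_div]
  exact inv_anti₀ (by positivity) (le_add_of_nonneg_left zero_le_one)

theorem inv_one_add_sq_sub_le_two_mul (t : ℝ) (m : ℤ) :
    (1 + (t - m) ^ 2)⁻¹ ≤ 2 * (1 + ((m - round t : ℤ) : ℝ) ^ 2)⁻¹ := by
  have hround : (t - round t) ^ 2 ≤ 1 / 4 := by
    nlinarith [abs_le.1 (abs_sub_round t)]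
  rw [← div_eq_mul_inv, inv_eq_one_div, div_le_div_iff₀ (by positivity) (by positivity)]
  push_cast
  -- `m - round t = (m - t) + (t - round t)` with `|t - round t| ≤ 1/2`
  nlinarith [sq_nonneg (t - m + (t - round t))]

theorem tsum_ofReal_inv_one_add_sq_sub_le (t : ℝ) :
    ∑' m : ℤ, ENNReal.ofReal (1 + (t - m) ^ 2)⁻¹ ≤
      ENNReal.ofReal (2 * ∑' k : ℤ, (1 + (k : ℝ) ^ 2)⁻¹) :=
  calc ∑' m : ℤ, ENNReal.ofReal (1 + (t - m) ^ 2)⁻¹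
      ≤ ∑' m : ℤ, ENNReal.ofReal (2 * (1 + ((m - round t : ℤ) : ℝ) ^ 2)⁻¹) :=
        ENNReal.tsum_le_tsum fun m => ENNReal.ofReal_le_ofReal (inv_one_add_sq_sub_le_two_mul t m)
    _ = ∑' k : ℤ, ENNReal.ofReal (2 * (1 + (k : ℝ) ^ 2)⁻¹) :=
        (Equiv.subRight (round t)).tsum_eq fun k : ℤ => ENNReal.ofReal (2 * (1 + (k : ℝ) ^ 2)⁻¹)
    _ = ENNReal.ofReal (2 * ∑' k : ℤ, (1 + (k : ℝ) ^ 2)⁻¹) := by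
        rw [← tsum_mul_left, ENNReal.ofReal_tsum_of_nonneg (fun _ => by positivity)
          (summable_inv_one_add_sq_int.mul_left 2)]

theorem tsum_prod_ofReal_inv_one_add_sq_sub_le {ι : Type*} [Fintype ι] (y : ι → ℝ) :
    ∑' j : ι → ℤ, ∏ i, ENNReal.ofReal (1 + (y i - j i) ^ 2)⁻¹ ≤
      ENNReal.ofReal ((2 * ∑' k : ℤ, (1 + (k : ℝ) ^ 2)⁻¹) ^ Fintype.card ι) := by
  have hS : 0 ≤ ∑' k : ℤ, (1 + (k : ℝ) ^ 2)⁻¹ := tsum_nonneg fun _ => by positivity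
  calc ∑' j : ι → ℤ, ∏ i, ENNReal.ofReal (1 + (y i - j i) ^ 2)⁻¹
      ≤ ∏ i, ∑' m : ℤ, ENNReal.ofReal (1 + (y i - m) ^ 2)⁻¹ :=
        ENNReal.tsum_pi_prod_le fun i (m : ℤ) => ENNReal.ofReal (1 + (y i - m) ^ 2)⁻¹
    _ ≤ ∏ _i : ι, ENNReal.ofReal (2 * ∑' k : ℤ, (1 + (k : ℝ) ^ 2)⁻¹) :=
        Finset.prod_le_prod' fun i _ => tsum_ofReal_inv_one_add_sq_sub_le (y i)
    _ = _ := by rw [Finset.prod_const, Finset.card_univ, ENNReal.ofReal_pow (by positivity)]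

theorem prod_one_add_sq_le {ι : Type*} [Fintype ι] (u : EuclideanSpace ℝ ι) :
    ∏ i, (1 + u i ^ 2) ≤ ((1 + ‖u‖) ^ Fintype.card ι) ^ 2 :=
  calc ∏ i, (1 + u i ^ 2) ≤ ∏ _i : ι, (1 + ‖u‖) ^ 2 := by
        refine Finset.prod_le_prod (fun i _ => by positivity) fun i _ => ?_
        have := sq_le_sq' (neg_le_of_abs_le (PiLp.norm_apply_le u i))
          (le_of_abs_le (PiLp.norm_apply_le u i))
        nlinarith [norm_nonneg u, Real.norm_eq_abs (u i), sq_abs (u i)]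
    _ = ((1 + ‖u‖) ^ Fintype.card ι) ^ 2 := by
        rw [Finset.prod_const, Finset.card_univ, ← pow_mul, ← pow_mul, mul_comm]

theorem sq_le_mul_prod_inv_one_add_sq {ι : Type*} [Fintype ι] {ψ : EuclideanSpace ℝ ι → ℝ}
    {B : ℝ} (hψ : ∀ u, (1 + ‖u‖) ^ Fintype.card ι * |ψ u| ≤ B) (u : EuclideanSpace ℝ ι) :
    ψ u ^ 2 ≤ B ^ 2 * ∏ i, (1 + u i ^ 2)⁻¹ := by
  have hP : 0 < ∏ i, (1 + u i ^ 2) := Finset.prod_pos fun i _ => by positivity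
  rw [Finset.prod_inv_distrib, ← div_eq_mul_inv, le_div_iff₀ hP]
  calc ψ u ^ 2 * ∏ i, (1 + u i ^ 2) ≤ |ψ u| ^ 2 * ((1 + ‖u‖) ^ Fintype.card ι) ^ 2 := by
        rw [sq_abs]; exact mul_le_mul_of_nonneg_left (prod_one_add_sq_le u) (sq_nonneg _)
    _ = ((1 + ‖u‖) ^ Fintype.card ι * |ψ u|) ^ 2 := by ring
    _ ≤ B ^ 2 := pow_le_pow_left₀ (by positivity) (hψ u) 2

theorem SchwartzMap.exists_one_add_norm_pow_mul_le {E F : Type*} [NormedAddCommGroup E]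
    [NormedSpace ℝ E] [NormedAddCommGroup F] [NormedSpace ℝ F] (η : SchwartzMap E F) (k : ℕ) :
    ∃ B, ∀ u, (1 + ‖u‖) ^ k * ‖η u‖ ≤ B :=
  ⟨_, fun u => by
    simpa using SchwartzMap.one_add_le_sup_seminorm_apply (𝕜 := ℝ) (m := (k, 0)) le_rfl le_rfl η u⟩

theorem LinearEquiv.sub_smul_symm_eq_smul_symm_sub {𝕜 E F : Type*} [Field 𝕜] [AddCommGroup E] [Module 𝕜 E]
    [AddCommGroup F] [Module 𝕜 F] (T : E ≃ₗ[𝕜] F) {r : 𝕜} (hr : r ≠ 0) (x : E) (v : F) :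
    x - r • T.symm v = r • T.symm (r⁻¹ • T x - v) := by
  rw [map_sub, map_smul, T.symm_apply_apply, smul_sub, smul_inv_smul₀ hr]

theorem eLpNorm_two_sq {α E : Type*} [MeasurableSpace α] [NormedAddCommGroup E]
    (μ : Measure α) (f : α → E) : eLpNorm f 2 μ ^ 2 = ∫⁻ x, ‖f x‖ₑ ^ 2 ∂μ := by
  simpa using eLpNorm_nnreal_pow_eq_lintegral (μ := μ) (f := f) (p := 2) two_ne_zero

theorem tsum_eLpNorm_ofReal_mul_sq_le {α ι : Type*} [MeasurableSpace α] [Countable ι]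
    {μ : Measure α} {w : ι → α → ℝ} {g : α → ℂ} {C : ℝ≥0∞} (hw : ∀ j, AEMeasurable (w j) μ)
    (hg : AEMeasurable g μ) (hC : ∀ x, ∑' j, ‖w j x‖ₑ ^ 2 ≤ C) :
    ∑' j, eLpNorm (fun x => (w j x : ℂ) * g x) 2 μ ^ 2 ≤ C * eLpNorm g 2 μ ^ 2 := by
  have hterm : ∀ j x, ‖(w j x : ℂ) * g x‖ₑ ^ 2 = ‖w j x‖ₑ ^ 2 * ‖g x‖ₑ ^ 2 := fun j x => by
    rw [enorm_mul, mul_pow, enorm_eq_nnnorm (w j x : ℂ), Complex.nnnorm_real, ← enorm_eq_nnnorm]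
  simp_rw [eLpNorm_two_sq, hterm]
  rw [← lintegral_tsum (f := fun j x => ‖w j x‖ₑ ^ 2 * ‖g x‖ₑ ^ 2)
      fun j => ((hw j).enorm.pow_const 2).mul (hg.enorm.pow_const 2),
    ← lintegral_const_mul'' _ (hg.enorm.pow_const 2)]
  refine lintegral_mono fun x => ?_
  rw [ENNReal.tsum_mul_right]
  gcongr
  exact hC x

namespace PaperStmt

@[fun_prop]
theorem continuous_jap : Continuous jap := by
  unfold jap; fun_prop

theorem jap_le_one_add {s : ℝ} (hs : 0 ≤ s) : jap s ≤ 1 + s :=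
  Real.sqrt_le_iff.2 ⟨by positivity, by nlinarith⟩

theorem exists_one_add_norm_pow_mul_abs_jap_pow_mul_le {E : Type*} [NormedAddCommGroup E]
    [NormedSpace ℝ E] [FiniteDimensional ℝ E] (η : SchwartzMap E ℝ) (T : E ≃ₗ[ℝ] E) (N k : ℕ) :
    ∃ B > 0, ∀ u, (1 + ‖u‖) ^ k * |jap ‖T.symm u‖ ^ N * η u| ≤ B := by
  obtain ⟨B, hB⟩ := η.exists_one_add_norm_pow_mul_le (N + k)
  set L := LinearMap.toContinuousLinearMap (T.symm : E →ₗ[ℝ] E)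
  refine ⟨max ((1 + ‖L‖) ^ N * B) 1, by positivity, fun u => le_max_of_le_left ?_⟩
  have hjap : jap ‖T.symm u‖ ≤ (1 + ‖L‖) * (1 + ‖u‖) := by
    have hT : ‖T.symm u‖ ≤ ‖L‖ * ‖u‖ := L.le_opNorm u
    nlinarith [jap_le_one_add (norm_nonneg (T.symm u)), norm_nonneg u, norm_nonneg L]
  have hjap0 : 0 ≤ jap ‖T.symm u‖ := Real.sqrt_nonneg _
  calc (1 + ‖u‖) ^ k * |jap ‖T.symm u‖ ^ N * η u|
      ≤ (1 + ‖u‖) ^ k * (((1 + ‖L‖) * (1 + ‖u‖)) ^ N * ‖η u‖) := by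
        rw [abs_mul, abs_of_nonneg (pow_nonneg hjap0 N), ← Real.norm_eq_abs]
        gcongr
    _ = (1 + ‖L‖) ^ N * ((1 + ‖u‖) ^ (N + k) * ‖η u‖) := by rw [mul_pow, pow_add]; ring
    _ ≤ (1 + ‖L‖) ^ N * B := by gcongr; exact hB u

theorem tsum_enorm_sq_sub_intVec_le {n : ℕ} {ψ : Rn n → ℝ} {B : ℝ}
    (hψ : ∀ u, (1 + ‖u‖) ^ n * |ψ u| ≤ B) (y : Rn n) :
    ∑' j : Fin n → ℤ, ‖ψ (y - intVec j)‖ₑ ^ 2 ≤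
      ENNReal.ofReal (B ^ 2 * (2 * ∑' k : ℤ, (1 + (k : ℝ) ^ 2)⁻¹) ^ n) := by
  have hψ' : ∀ u, (1 + ‖u‖) ^ Fintype.card (Fin n) * |ψ u| ≤ B := by
    simpa only [Fintype.card_fin] using hψ
  calc ∑' j : Fin n → ℤ, ‖ψ (y - intVec j)‖ₑ ^ 2
      ≤ ∑' j : Fin n → ℤ, ENNReal.ofReal (B ^ 2) *
          ∏ i, ENNReal.ofReal (1 + (y i - j i) ^ 2)⁻¹ := by
        refine ENNReal.tsum_le_tsum fun j => ?_
        rw [Real.enorm_eq_ofReal_abs, ← ENNReal.ofReal_pow (abs_nonneg _), sq_abs,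
          ← ENNReal.ofReal_prod_of_nonneg (fun _ _ => by positivity),
          ← ENNReal.ofReal_mul (sq_nonneg B)]
        exact ENNReal.ofReal_le_ofReal (sq_le_mul_prod_inv_one_add_sq hψ' (y - intVec j))
    _ = ENNReal.ofReal (B ^ 2) *
          ∑' j : Fin n → ℤ, ∏ i, ENNReal.ofReal (1 + (y i - j i) ^ 2)⁻¹ :=
        ENNReal.tsum_mul_left
    _ ≤ ENNReal.ofReal (B ^ 2) *
          ENNReal.ofReal ((2 * ∑' k : ℤ, (1 + (k : ℝ) ^ 2)⁻¹) ^ n) := by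
        gcongr
        simpa only [Fintype.card_fin] using tsum_prod_ofReal_inv_one_add_sq_sub_le (⇑y)
    _ = _ := (ENNReal.ofReal_mul (sq_nonneg B)).symm

theorem statement_13_general (n : ℕ) (η₀ : SchwartzMap (Rn n) ℝ)
    (T : Rn n ≃ₗ[ℝ] Rn n) (N : ℕ) :
    ∃ C : ℝ, 0 < C ∧
      ∀ r : ℝ, 0 < r → ∀ g : Rn n → ℂ, MemLp g 2 volume →
        ∑' j : Fin n → ℤ,
            eLpNorm
                (fun x =>
                  ((jap (‖x - r • T.symm (intVec j)‖ / r) ^ N *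
                      η₀ (r⁻¹ • T (x - r • T.symm (intVec j))) : ℝ) : ℂ) * g x) 2
                volume ^ 2 ≤
          ENNReal.ofReal C * eLpNorm g 2 volume ^ 2 := by
  obtain ⟨B, hB0, hB⟩ := exists_one_add_norm_pow_mul_abs_jap_pow_mul_le η₀ T N n
  have hS : 0 < ∑' k : ℤ, (1 + (k : ℝ) ^ 2)⁻¹ :=
    summable_inv_one_add_sq_int.tsum_pos (fun _ => by positivity) 0 (by norm_num)
  refine ⟨B ^ 2 * (2 * ∑' k : ℤ, (1 + (k : ℝ) ^ 2)⁻¹) ^ n, by positivity,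
    fun r hr g hg => tsum_eLpNorm_ofReal_mul_sq_le (fun j => ?_) hg.1.aemeasurable fun x => ?_⟩
  · have hT : Continuous T := T.toLinearMap.continuous_of_finiteDimensional
    have := η₀.continuous
    fun_prop
  · have hweight : ∀ v : Rn n, jap (‖x - r • T.symm v‖ / r) ^ N * η₀ (r⁻¹ • T (x - r • T.symm v))
        = jap ‖T.symm (r⁻¹ • T x - v)‖ ^ N * η₀ (r⁻¹ • T x - v) := fun v => by
      rw [T.sub_smul_symm_eq_smul_symm_sub hr.ne', norm_smul, Real.norm_of_nonneg hr.le,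
        mul_div_cancel_left₀ _ hr.ne', T.map_smul, T.apply_symm_apply, inv_smul_smul₀ hr.ne']
    simp_rw [hweight]
    exact tsum_enorm_sq_sub_intVec_le hB _

/-- the weighted almost-orthogonality estimate for the family of
bump functions `χ_j(x) = η₀(𝒯(x - c_j)/r)` adapted to the cubes of the oblique
lattice `r 𝒯⁻¹(ℤⁿ)`, built from a Schwartz profile `η₀ ≥ 0` with `‖η₀‖_{L¹} = 1`
whose Fourier transform is supported in the unit ball:
`∑_j ‖⟨(x-c_j)/r⟩^N χ_j g‖²_{L²} ≤ C_N ‖g‖²_{L²}`. -/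
theorem statement_13 (n : ℕ) (hn : 1 ≤ n) (η₀ : SchwartzMap (Rn n) ℝ)
    (hpos : ∀ x, 0 ≤ η₀ x)
    (hL1 : eLpNorm (fun x => η₀ x) 1 volume = 1)
    (hfour : Function.support
        (FourierTransform.fourier (fun x : Rn n => (η₀ x : ℂ))) ⊆
      Metric.closedBall 0 1)
    (T : Rn n ≃ₗ[ℝ] Rn n) (N : ℕ) :
    ∃ C : ℝ, 0 < C ∧
      ∀ r : ℝ, 0 < r → ∀ g : Rn n → ℂ, MemLp g 2 volume →
        ∑' j : Fin n → ℤ,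
            eLpNorm
                (fun x =>
                  ((jap (‖x - r • T.symm (intVec j)‖ / r) ^ N *
                      η₀ (r⁻¹ • T (x - r • T.symm (intVec j))) : ℝ) : ℂ) * g x) 2
                volume ^ 2 ≤
          ENNReal.ofReal C * eLpNorm g 2 volume ^ 2 :=
  statement_13_general n η₀ T N

end PaperStmt
end
end
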